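/- arXiv:1906.03690 — 12 statements merged into one kernel-verified Lean document; each statement's English description precedes it below -/
import Mathlib

section
/- For every s ∈ ℝ, (1/2)·ς²·φ''(s) + ((μ − b·s)/(1−p))·φ'(s) − α·θ(s)²·φ(s) = −λ·φ(s). -/
/-!
The eigenfunction is a Gaussian `φ = exp(-A s²/2 - B s)`, so `φ' = -(A s + B) φ` and
`φ'' = ((A s + B)² - A) φ`. Dividing by `φ` turns the eigen-equation into a polynomial identity
of degree two in `s`. With `q = √(1 - p)`, `A` solves the Riccati equation
`ς² A²/2 + b A/q² = α b²/ς²`, which kills the `s²` term; `B`, the same expression as `A` with `b`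
replaced by `-μ`, kills the `s` term, and the constant term is `-λ`.
-/

open Real

section GaussianDerivatives

variable (A B : ℝ)

theorem hasDerivAt_exp_neg_quadratic (s : ℝ) :
    HasDerivAt (fun s => exp (-(1 / 2) * A * s ^ 2 - B * s))
      (-(A * s + B) * exp (-(1 / 2) * A * s ^ 2 - B * s)) s := by
  have hexponent : HasDerivAt (fun s : ℝ => -(1 / 2) * A * s ^ 2 - B * s) (-(A * s + B)) s :=
    (((hasDerivAt_pow 2 s).const_mul (-(1 / 2) * A)).sub
      ((hasDerivAt_id' s).const_mul B)).congr_deriv (by push_cast; ring)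
  convert hexponent.exp using 1
  ring

theorem deriv_exp_neg_quadratic :
    deriv (fun s => exp (-(1 / 2) * A * s ^ 2 - B * s)) =
      fun s => -(A * s + B) * exp (-(1 / 2) * A * s ^ 2 - B * s) :=
  funext fun s => (hasDerivAt_exp_neg_quadratic A B s).deriv

theorem deriv_deriv_exp_neg_quadratic (s : ℝ) :
    deriv (deriv fun s => exp (-(1 / 2) * A * s ^ 2 - B * s)) s =
      ((A * s + B) ^ 2 - A) * exp (-(1 / 2) * A * s ^ 2 - B * s) := by
  rw [deriv_exp_neg_quadratic]
  have hlinear : HasDerivAt (fun s : ℝ => -(A * s + B)) (-A) s :=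
    ((((hasDerivAt_id' s).const_mul A).add_const B).neg).congr_deriv (by ring)
  exact (hlinear.mul (hasDerivAt_exp_neg_quadratic A B s)).deriv.trans (by ring)

end GaussianDerivatives

theorem ou_eigen_coefficient_identity {μ b ς p q : ℝ} (hς : ς ≠ 0) (hq : q ≠ 0)
    (hqp : q ^ 2 = 1 - p) (s : ℝ) :
    let A := b * (q - 1) / ((1 - p) * ς ^ 2)
    let B := -μ * (q - 1) / ((1 - p) * ς ^ 2)
    (1 / 2) * ς ^ 2 * ((A * s + B) ^ 2 - A) - (μ - b * s) / (1 - p) * (A * s + B)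
        - -p / (2 * (1 - p) ^ 2) * ((μ - b * s) / ς) ^ 2 =
      -(b * (q - 1) / (2 * (1 - p))) := by
  obtain rfl : p = 1 - q ^ 2 := by linarith
  intro A B
  simp only [A, B, sub_sub_cancel]
  field_simp
  ring

theorem stmt1_general (μ b ς p : ℝ) (hς : 0 < ς) (hp : p < 0)
    (α : ℝ) (hα : α = -p / (2 * (1 - p) ^ 2))
    (θ : ℝ → ℝ) (hθ : ∀ s, θ s = (μ - b * s) / ς)
    (A B lam : ℝ)
    (hA : A = b * (Real.sqrt (1 - p) - 1) / ((1 - p) * ς ^ 2))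
    (hB : B = -μ * (Real.sqrt (1 - p) - 1) / ((1 - p) * ς ^ 2))
    (hlam : lam = b * (Real.sqrt (1 - p) - 1) / (2 * (1 - p)))
    (φ : ℝ → ℝ) (hφ : ∀ s, φ s = Real.exp (-(1 / 2) * A * s ^ 2 - B * s)) :
    ∀ s, (1 / 2) * ς ^ 2 * deriv (deriv φ) s + ((μ - b * s) / (1 - p)) * deriv φ s
        - α * (θ s) ^ 2 * φ s = -lam * φ s := by
  intro s
  obtain rfl : φ = fun s => exp (-(1 / 2) * A * s ^ 2 - B * s) := funext hφ
  have hsqrt_pos : 0 < √(1 - p) := sqrt_pos.mpr (by linarith)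
  have hcoeff := ou_eigen_coefficient_identity (μ := μ) (b := b) hς.ne' hsqrt_pos.ne'
    (sq_sqrt (by linarith)) s
  rw [← hA, ← hB, ← hα, ← hlam] at hcoeff
  rw [deriv_deriv_exp_neg_quadratic, deriv_exp_neg_quadratic, hθ, ← hcoeff]
  ring

/-- Ornstein–Uhlenbeck complete-market model: the pair `(λ, φ)` with
`λ = b(√(1-p)-1)/(2(1-p))` and `φ(s) = exp(-(1/2)A s² - B s)` is an eigenpair of the
operator `Lφ = (1/2)ς²φ'' + ((μ - b s)/(1-p))φ' - α θ(s)² φ`, i.e.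
`(1/2)ς²φ''(s) + ((μ - b s)/(1-p))φ'(s) - α θ(s)² φ(s) = -λ φ(s)` for all `s`. -/
theorem stmt1 (μ b ς p : ℝ) (hb : 0 < b) (hς : 0 < ς) (hp : p < 0)
    (α : ℝ) (hα : α = -p / (2 * (1 - p) ^ 2))
    (θ : ℝ → ℝ) (hθ : ∀ s, θ s = (μ - b * s) / ς)
    (A B lam : ℝ)
    (hA : A = b * (Real.sqrt (1 - p) - 1) / ((1 - p) * ς ^ 2))
    (hB : B = -μ * (Real.sqrt (1 - p) - 1) / ((1 - p) * ς ^ 2))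
    (hlam : lam = b * (Real.sqrt (1 - p) - 1) / (2 * (1 - p)))
    (φ : ℝ → ℝ) (hφ : ∀ s, φ s = Real.exp (-(1 / 2) * A * s ^ 2 - B * s)) :
    ∀ s, (1 / 2) * ς ^ 2 * deriv (deriv φ) s + ((μ - b * s) / (1 - p)) * deriv φ s
        - α * (θ s) ^ 2 * φ s = -lam * φ s :=
  stmt1_general μ b ς p hς hp α hα θ hθ A B lam hA hB hlam φ hφ
end

section
/- Let (Ω,F,P) be a probability space, T > 0, α > 0, c > 0, and let f : [0,T] × Ω → [0,∞) be jointly measurable. Suppose C ≥ 0 is such that ∫_Ω exp(c·f(s,ω)) dP(ω) ≤ C for every s ∈ [0,T]. Then ∫_Ω exp( c·α·e^{−αT} · ∫₀ᵀ e^{αs} f(s,ω) ds ) dP(ω) ≤ C, where the outer integral is the Lebesgue (upper) integral with the convention exp(+∞) = +∞. -/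
/-!
Since `e^{αT} - 1 ≤ e^{αT}`, the quantity `c α e^{-αT} ∫₀ᵀ e^{αs} f(s, ω) ds` is at most the average
of `c f(·, ω)` against the probability measure on `[0, T]` with density `α e^{αs} / (e^{αT} - 1)`.
Jensen's inequality moves `exp` inside this average, and after exchanging the order of integration
the bound on `∫ exp(c f(s, ·)) dP` for each fixed `s` finishes the proof.
-/

open MeasureTheory
open scoped ENNReal

/-- The exponential function extended to `ℝ≥0∞`, with the convention `exp(+∞) = +∞`. -/
noncomputable def expENN (x : ℝ≥0∞) : ℝ≥0∞ :=
  if x = ⊤ then ⊤ else ENNReal.ofReal (Real.exp x.toReal)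

open Real Set

lemma expENN_ofReal {x : ℝ} (hx : 0 ≤ x) : expENN (ENNReal.ofReal x) = ENNReal.ofReal (exp x) := by
  rw [expENN, if_neg ENNReal.ofReal_ne_top, ENNReal.toReal_ofReal hx]

lemma expENN_mono : Monotone expENN := by
  intro x y hxy
  by_cases hy : y = ⊤
  · simp [expENN, hy]
  have hx : x ≠ ⊤ := ne_top_of_le_ne_top hy hxy
  rw [expENN, expENN, if_neg hx, if_neg hy]
  exact ENNReal.ofReal_le_ofReal (exp_le_exp.mpr (ENNReal.toReal_mono hy hxy))

theorem expENN_lintegral_le {X : Type*} [MeasurableSpace X] (ν : Measure X)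
    [IsProbabilityMeasure ν] {h : X → ℝ} (hh : Measurable h) (h_nonneg : ∀ x, 0 ≤ h x) :
    expENN (∫⁻ x, ENNReal.ofReal (h x) ∂ν) ≤ ∫⁻ x, ENNReal.ofReal (exp (h x)) ∂ν := by
  by_cases h_top : ∫⁻ x, ENNReal.ofReal (exp (h x)) ∂ν = ⊤
  · simp [h_top]
  have exp_int : Integrable (fun x => exp (h x)) ν :=
    (lintegral_ofReal_ne_top_iff_integrable (by fun_prop)
      (.of_forall fun x => (exp_pos _).le)).mp h_top
  have h_int : Integrable h ν := exp_int.mono' hh.aestronglyMeasurable <| .of_forall fun x => by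
    rw [Real.norm_of_nonneg (h_nonneg x)]
    linarith [add_one_le_exp (h x)]
  rw [← ofReal_integral_eq_lintegral_ofReal h_int (.of_forall h_nonneg),
    ← ofReal_integral_eq_lintegral_ofReal exp_int (.of_forall fun x => (exp_pos _).le),
    expENN_ofReal (integral_nonneg h_nonneg)]
  exact ENNReal.ofReal_le_ofReal <| convexOn_exp.map_integral_le continuousOn_exp
    isClosed_univ (.of_forall fun _ => mem_univ _) h_int exp_int

theorem lintegral_lintegral_le_of_ae_le {X Ω : Type*} [MeasurableSpace X] [MeasurableSpace Ω]
    (ν : Measure X) [IsProbabilityMeasure ν] (P : Measure Ω) [SFinite P]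
    {F : X → Ω → ℝ≥0∞} (hF : Measurable (Function.uncurry F)) {C : ℝ≥0∞}
    (hC : ∀ᵐ s ∂ν, ∫⁻ ω, F s ω ∂P ≤ C) :
    ∫⁻ ω, ∫⁻ s, F s ω ∂ν ∂P ≤ C := by
  rw [lintegral_lintegral_swap (f := fun ω s => F s ω) (hF.comp measurable_swap).aemeasurable]
  calc ∫⁻ s, ∫⁻ ω, F s ω ∂P ∂ν ≤ ∫⁻ _, C ∂ν := lintegral_mono_ae hC
    _ = C := by simp

/-- The probability measure on `[0, T]` with density `α e^{α s} / (e^{α T} - 1)`: the pullback,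
under `u = e^{α s}`, of normalized Lebesgue measure on `[1, e^{α T}]`. -/
noncomputable def expWeight (α T : ℝ) : Measure ℝ :=
  (volume.restrict (Icc 0 T)).withDensity
    fun s => ENNReal.ofReal (α / (exp (α * T) - 1) * exp (α * s))

lemma lintegral_expWeight (α T : ℝ) (g : ℝ → ℝ≥0∞) :
    ∫⁻ s, g s ∂expWeight α T =
      ∫⁻ s in Icc 0 T, ENNReal.ofReal (α / (exp (α * T) - 1) * exp (α * s)) * g s := by
  rw [expWeight, lintegral_withDensity_eq_lintegral_mul_non_measurable _ (by fun_prop)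
    (.of_forall fun _ => ENNReal.ofReal_lt_top)]
  rfl

lemma ae_expWeight_mem_Icc (α T : ℝ) : ∀ᵐ s ∂expWeight α T, s ∈ Icc 0 T :=
  (withDensity_absolutelyContinuous _ _).ae_le (ae_restrict_mem measurableSet_Icc)

lemma integral_exp_mul_Icc {α : ℝ} (hα : α ≠ 0) {T : ℝ} (hT : 0 ≤ T) :
    ∫ s in Icc 0 T, exp (α * s) = (exp (α * T) - 1) / α := by
  rw [integral_Icc_eq_integral_Ioc, ← intervalIntegral.integral_of_le hT,
    intervalIntegral.integral_comp_mul_left (fun s => exp s) hα, integral_exp, mul_zero, exp_zero,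
    smul_eq_mul, inv_mul_eq_div]

lemma isProbabilityMeasure_expWeight {α T : ℝ} (hα : 0 < α) (hT : 0 < T) :
    IsProbabilityMeasure (expWeight α T) := by
  have hM : 0 < exp (α * T) - 1 := sub_pos.mpr (one_lt_exp_iff.mpr (mul_pos hα hT))
  constructor
  rw [← lintegral_one, lintegral_expWeight]
  simp only [mul_one]
  rw [← ofReal_integral_eq_lintegral_ofReal (by fun_prop : Continuous _).integrableOn_Icc
      (.of_forall fun s => by positivity),
    integral_const_mul, integral_exp_mul_Icc hα.ne' hT.le]
  field_simp
  simp

lemma ofReal_mul_setLIntegral_le_lintegral_expWeight {α T c : ℝ} (hα : 0 < α) (hT : 0 < T)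
    (hc : 0 ≤ c) {g : ℝ → ℝ} (hg : ∀ s, 0 ≤ g s) :
    ENNReal.ofReal (c * α * exp (-α * T)) * ∫⁻ s in Icc 0 T, ENNReal.ofReal (exp (α * s) * g s) ≤
      ∫⁻ s, ENNReal.ofReal (c * g s) ∂expWeight α T := by
  have hM : 0 < exp (α * T) - 1 := sub_pos.mpr (one_lt_exp_iff.mpr (mul_pos hα hT))
  have h_exp : exp (-α * T) ≤ (exp (α * T) - 1)⁻¹ := by
    rw [neg_mul, exp_neg]
    exact inv_anti₀ hM (by linarith)
  rw [lintegral_expWeight, ← lintegral_const_mul' _ _ ENNReal.ofReal_ne_top]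
  refine lintegral_mono fun s => ?_
  have hgs := hg s
  rw [← ENNReal.ofReal_mul (by positivity), ← ENNReal.ofReal_mul (by positivity)]
  refine ENNReal.ofReal_le_ofReal ?_
  calc c * α * exp (-α * T) * (exp (α * s) * g s)
      = c * α * exp (α * s) * g s * exp (-α * T) := by ring
    _ ≤ c * α * exp (α * s) * g s * (exp (α * T) - 1)⁻¹ :=
      mul_le_mul_of_nonneg_left h_exp (by positivity)
    _ = α / (exp (α * T) - 1) * exp (α * s) * (c * g s) := by ring

theorem stmt2_general
    {Ω : Type*} [MeasurableSpace Ω] (P : Measure Ω) [IsProbabilityMeasure P]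
    (T α c : ℝ) (hT : 0 < T) (hα : 0 < α) (hc : 0 < c)
    (f : ℝ → Ω → ℝ) (hfmeas : Measurable (Function.uncurry f))
    (hfnonneg : ∀ s ω, 0 ≤ f s ω)
    (C : ℝ)
    (hbound : ∀ s ∈ Set.Icc (0 : ℝ) T,
      ∫⁻ ω, ENNReal.ofReal (Real.exp (c * f s ω)) ∂P ≤ ENNReal.ofReal C) :
    ∫⁻ ω, expENN (ENNReal.ofReal (c * α * Real.exp (-α * T)) *
        ∫⁻ s in Set.Icc (0 : ℝ) T, ENNReal.ofReal (Real.exp (α * s) * f s ω)) ∂P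
      ≤ ENNReal.ofReal C := by
  have := isProbabilityMeasure_expWeight hα hT
  calc _ ≤ ∫⁻ ω, expENN (∫⁻ s, ENNReal.ofReal (c * f s ω) ∂expWeight α T) ∂P :=
        lintegral_mono fun ω => expENN_mono <|
          ofReal_mul_setLIntegral_le_lintegral_expWeight hα hT hc.le (hfnonneg · ω)
    _ ≤ ∫⁻ ω, ∫⁻ s, ENNReal.ofReal (exp (c * f s ω)) ∂expWeight α T ∂P :=
        lintegral_mono fun ω => expENN_lintegral_le _
          (measurable_const.mul (hfmeas.comp measurable_prodMk_right))
          fun s => mul_nonneg hc.le (hfnonneg s ω)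
    _ ≤ ENNReal.ofReal C :=
        lintegral_lintegral_le_of_ae_le _ _ (by fun_prop)
          (by filter_upwards [ae_expWeight_mem_Icc α T] with s hs using hbound s hs)

/-- Jensen/Fubini estimate: if `∫ exp(c f(s,·)) dP ≤ C` for every `s ∈ [0,T]`, then
`∫ exp(c α e^{-αT} ∫₀ᵀ e^{αs} f(s,·) ds) dP ≤ C`, where the outer integral is the
Lebesgue upper integral with the convention `exp(+∞) = +∞`. -/
theorem stmt2
    {Ω : Type*} [MeasurableSpace Ω] (P : Measure Ω) [IsProbabilityMeasure P]
    (T α c : ℝ) (hT : 0 < T) (hα : 0 < α) (hc : 0 < c)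
    (f : ℝ → Ω → ℝ) (hfmeas : Measurable (Function.uncurry f))
    (hfnonneg : ∀ s ω, 0 ≤ f s ω)
    (C : ℝ) (hC : 0 ≤ C)
    (hbound : ∀ s ∈ Set.Icc (0 : ℝ) T,
      ∫⁻ ω, ENNReal.ofReal (Real.exp (c * f s ω)) ∂P ≤ ENNReal.ofReal C) :
    ∫⁻ ω, expENN (ENNReal.ofReal (c * α * Real.exp (-α * T)) *
        ∫⁻ s in Set.Icc (0 : ℝ) T, ENNReal.ofReal (Real.exp (α * s) * f s ω)) ∂P
      ≤ ENNReal.ofReal C :=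
  stmt2_general P T α c hT hα hc f hfmeas hfnonneg C hbound
end

section
/- Define β(t) = (q(1−q)μ²/ς²)·(1 − e^{−2α₄ t}) / (α₄ + α₁ + (α₄ − α₁)e^{−2α₄ t}) for t ≥ 0. Then the denominator α₄ + α₁ + (α₄ − α₁)e^{−2α₄ t} is strictly positive for every t ≥ 0, β(0) = 0, and β satisfies the Riccati equation β'(t) = −α₂·β(t)² − 2α₁·β(t) + q(1−q)μ²/ς² for all t ≥ 0. -/
open Real Set

noncomputable def riccatiSolution (a₁ a₄ c t : ℝ) : ℝ :=
  c * (1 - exp (-2 * a₄ * t)) / (a₄ + a₁ + (a₄ - a₁) * exp (-2 * a₄ * t))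

theorem riccatiSolution_zero (a₁ a₄ c : ℝ) : riccatiSolution a₁ a₄ c 0 = 0 := by
  simp [riccatiSolution]

theorem add_add_sub_mul_pos_of_abs_lt {a₁ a₄ E : ℝ} (h : |a₁| < a₄) (hE : 0 ≤ E) :
    0 < a₄ + a₁ + (a₄ - a₁) * E := by
  obtain ⟨h₁, h₂⟩ := abs_lt.mp h
  nlinarith

theorem hasDerivAt_riccatiSolution {a₁ a₂ a₄ c t : ℝ} (h : a₄ ^ 2 = a₁ ^ 2 + a₂ * c)
    (hD : a₄ + a₁ + (a₄ - a₁) * exp (-2 * a₄ * t) ≠ 0) :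
    HasDerivAt (riccatiSolution a₁ a₄ c)
      (-a₂ * riccatiSolution a₁ a₄ c t ^ 2 - 2 * a₁ * riccatiSolution a₁ a₄ c t + c) t := by
  have hE := ((hasDerivAt_id' t).const_mul (-2 * a₄)).exp
  refine (((hE.const_sub 1).const_mul c).div
    ((hE.const_mul (a₄ - a₁)).const_add (a₄ + a₁)) hD).congr_deriv ?_
  unfold riccatiSolution
  -- With `D` the denominator, `D - a₁ (1 - E) = a₄ (1 + E)` and `a₂ c = a₄² - a₁²` make both
  -- sides equal to `4 a₄² c E / D²`.
  generalize exp (-2 * a₄ * t) = E at hD ⊢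
  generalize hDdef : a₄ + a₁ + (a₄ - a₁) * E = D at hD ⊢
  field_simp
  subst hDdef
  linear_combination (-(c * (1 - E) ^ 2)) * h

theorem abs_lt_sqrt_sq_add (a : ℝ) {d : ℝ} (hd : 0 < d) : |a| < √(a ^ 2 + d) :=
  (lt_sqrt (abs_nonneg a)).2 (by rw [sq_abs]; linarith)

theorem sq_add_sq_sqrt_one_sub_sq_mul_div_pos (σ₁ : ℝ) {ρ σ q : ℝ} (hσ : σ ≠ 0)
    (hρ : ρ ∈ Ioo (-1 : ℝ) 1) (hq : q < 1) :
    0 < σ₁ ^ 2 + (√(1 - ρ ^ 2) * σ) ^ 2 / (1 - q) := by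
  have hρ' : 0 < 1 - ρ ^ 2 := by nlinarith [hρ.1, hρ.2]
  have hq' : 0 < 1 - q := sub_pos.2 hq
  rw [mul_pow, sq_sqrt hρ'.le]
  positivity

theorem stmt4_general (μ ς σ ρ q : ℝ)
    (hμ : μ ≠ 0) (hς : 0 < ς) (hσ : 0 < σ)
    (hρ : ρ ∈ Set.Ioo (-1 : ℝ) 1) (hq : q ∈ Set.Ioo (0 : ℝ) 1)
    (σ₁ σ₂ α₁ α₂ α₄ : ℝ)
    (hσ₂ : σ₂ = Real.sqrt (1 - ρ ^ 2) * σ)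
    (hα₂ : α₂ = σ₁ ^ 2 + σ₂ ^ 2 / (1 - q))
    (hα₄ : α₄ = Real.sqrt (α₁ ^ 2 + q * (1 - q) * α₂ * μ ^ 2 / ς ^ 2))
    (β : ℝ → ℝ)
    (hβ : ∀ t, β t = (q * (1 - q) * μ ^ 2 / ς ^ 2) * (1 - Real.exp (-2 * α₄ * t)) /
        (α₄ + α₁ + (α₄ - α₁) * Real.exp (-2 * α₄ * t))) :
    (∀ t ≥ (0 : ℝ), 0 < α₄ + α₁ + (α₄ - α₁) * Real.exp (-2 * α₄ * t)) ∧
    β 0 = 0 ∧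
    (∀ t ≥ (0 : ℝ), HasDerivAt β
      (-α₂ * (β t) ^ 2 - 2 * α₁ * β t + q * (1 - q) * μ ^ 2 / ς ^ 2) t) := by
  obtain ⟨hq₀, hq₁⟩ := hq
  set c := q * (1 - q) * μ ^ 2 / ς ^ 2
  have hc : 0 < c := by have := sub_pos.2 hq₁; positivity
  have hα₂pos : 0 < α₂ := hα₂ ▸ hσ₂ ▸ sq_add_sq_sqrt_one_sub_sq_mul_div_pos σ₁ hσ.ne' hρ hq₁
  have hα₄' : α₄ = √(α₁ ^ 2 + α₂ * c) := by rw [hα₄]; congr 1; ring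
  have hα₄sq : α₄ ^ 2 = α₁ ^ 2 + α₂ * c := by rw [hα₄', sq_sqrt (by positivity)]
  have hα₁α₄ : |α₁| < α₄ := hα₄' ▸ abs_lt_sqrt_sq_add α₁ (mul_pos hα₂pos hc)
  have hD t := add_add_sub_mul_pos_of_abs_lt hα₁α₄ (exp_pos (-2 * α₄ * t)).le
  obtain rfl : β = riccatiSolution α₁ α₄ c := funext hβ
  exact ⟨fun t _ => hD _, riccatiSolution_zero α₁ α₄ c,
    fun t _ => hasDerivAt_riccatiSolution hα₄sq (hD _).ne'⟩

/-- Kim–Omberg model: the explicit function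
`β(t) = (q(1-q)μ²/ς²)(1-e^{-2α₄t})/(α₄+α₁+(α₄-α₁)e^{-2α₄t})` has strictly positive
denominator for all `t ≥ 0`, satisfies `β(0) = 0`, and solves the Riccati equation
`β' = -α₂β² - 2α₁β + q(1-q)μ²/ς²` on `[0,∞)`. -/
theorem stmt4 (k m μ ς σ ρ q : ℝ)
    (hk : 0 < k) (hμ : μ ≠ 0) (hς : 0 < ς) (hσ : 0 < σ)
    (hρ : ρ ∈ Set.Ioo (-1 : ℝ) 1) (hq : q ∈ Set.Ioo (0 : ℝ) 1)
    (σ₁ σ₂ α₁ α₂ α₃ α₄ : ℝ)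
    (hσ₁ : σ₁ = ρ * σ) (hσ₂ : σ₂ = Real.sqrt (1 - ρ ^ 2) * σ)
    (hα₁ : α₁ = k + q * μ * σ₁ / ς) (hα₂ : α₂ = σ₁ ^ 2 + σ₂ ^ 2 / (1 - q))
    (hα₃ : α₃ = k * m)
    (hα₄ : α₄ = Real.sqrt (α₁ ^ 2 + q * (1 - q) * α₂ * μ ^ 2 / ς ^ 2))
    (β : ℝ → ℝ)
    (hβ : ∀ t, β t = (q * (1 - q) * μ ^ 2 / ς ^ 2) * (1 - Real.exp (-2 * α₄ * t)) /
        (α₄ + α₁ + (α₄ - α₁) * Real.exp (-2 * α₄ * t))) :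
    (∀ t ≥ (0 : ℝ), 0 < α₄ + α₁ + (α₄ - α₁) * Real.exp (-2 * α₄ * t)) ∧
    β 0 = 0 ∧
    (∀ t ≥ (0 : ℝ), HasDerivAt β
      (-α₂ * (β t) ^ 2 - 2 * α₁ * β t + q * (1 - q) * μ ^ 2 / ς ^ 2) t) :=
  stmt4_general μ ς σ ρ q hμ hς hσ hρ hq σ₁ σ₂ α₁ α₂ α₄ hσ₂ hα₂ hα₄ β hβ
end

section
/- With β(t) = (q(1−q)μ²/ς²)·(1 − e^{−2α₄ t}) / (α₄ + α₁ + (α₄ − α₁)e^{−2α₄ t}), one has for every t ≥ 0: 0 ≤ B − β(t) ≤ (2α₄(α₄ − α₁)/(α₂(α₄ + α₁)))·e^{−2α₄ t}. In particular β(t) → B as t → ∞. -/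
set_option maxHeartbeats 1000000


open Filter Topology

/-- Kim–Omberg model: the Riccati solution `β` satisfies
`0 ≤ B - β(t) ≤ (2α₄(α₄-α₁)/(α₂(α₄+α₁)))·e^{-2α₄t}` for all `t ≥ 0`; in particular
`β(t) → B` as `t → ∞`. -/
theorem stmt5 (k m μ ς σ ρ q : ℝ)
    (hk : 0 < k) (hμ : μ ≠ 0) (hς : 0 < ς) (hσ : 0 < σ)
    (hρ : ρ ∈ Set.Ioo (-1 : ℝ) 1) (hq : q ∈ Set.Ioo (0 : ℝ) 1)
    (σ₁ σ₂ α₁ α₂ α₃ α₄ B : ℝ)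
    (hσ₁ : σ₁ = ρ * σ) (hσ₂ : σ₂ = Real.sqrt (1 - ρ ^ 2) * σ)
    (hα₁ : α₁ = k + q * μ * σ₁ / ς) (hα₂ : α₂ = σ₁ ^ 2 + σ₂ ^ 2 / (1 - q))
    (hα₃ : α₃ = k * m)
    (hα₄ : α₄ = Real.sqrt (α₁ ^ 2 + q * (1 - q) * α₂ * μ ^ 2 / ς ^ 2))
    (hB : B = (α₄ - α₁) / α₂)
    (β : ℝ → ℝ)
    (hβ : ∀ t, β t = (q * (1 - q) * μ ^ 2 / ς ^ 2) * (1 - Real.exp (-2 * α₄ * t)) /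
        (α₄ + α₁ + (α₄ - α₁) * Real.exp (-2 * α₄ * t))) :
    (∀ t ≥ (0 : ℝ), 0 ≤ B - β t ∧
      B - β t ≤ (2 * α₄ * (α₄ - α₁) / (α₂ * (α₄ + α₁))) * Real.exp (-2 * α₄ * t)) ∧
    Tendsto β atTop (𝓝 B) := by
  obtain ⟨hq0, hq1⟩ := hq
  have hq1' : 0 < 1 - q := by linarith
  have hρsq : 0 < 1 - ρ ^ 2 := by nlinarith [hρ.1, hρ.2]
  have hσ₂pos : 0 < σ₂ := by
    rw [hσ₂]; exact mul_pos (Real.sqrt_pos.mpr hρsq) hσ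
  have hα₂pos : 0 < α₂ := by
    rw [hα₂]
    have : 0 < σ₂ ^ 2 / (1 - q) := by positivity
    nlinarith [sq_nonneg σ₁]
  have hμ2 : 0 < μ ^ 2 := by positivity
  have hc : 0 < q * (1 - q) * μ ^ 2 / ς ^ 2 := by positivity
  have hα₄sq : α₄ ^ 2 = α₁ ^ 2 + q * (1 - q) * α₂ * μ ^ 2 / ς ^ 2 := by
    rw [hα₄, Real.sq_sqrt]
    positivity
  have hα₄nonneg : 0 ≤ α₄ := hα₄ ▸ Real.sqrt_nonneg _
  have hkey : α₂ * (q * (1 - q) * μ ^ 2 / ς ^ 2) = α₄ ^ 2 - α₁ ^ 2 := by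
    rw [hα₄sq]; field_simp; ring
  have hprod : 0 < α₄ ^ 2 - α₁ ^ 2 := by
    rw [← hkey]; exact mul_pos hα₂pos hc
  have hsum : 0 < α₄ + α₁ := by nlinarith
  have hdiff : 0 < α₄ - α₁ := by nlinarith
  have hα₄pos : 0 < α₄ := by linarith
  have hkey2 : α₂ * (q * (1 - q) * μ ^ 2 / ς ^ 2) = (α₄ - α₁) * (α₄ + α₁) := by
    rw [hkey]; ring
  -- form of B - β t
  have hform : ∀ t : ℝ, B - β t =
      2 * α₄ * (q * (1 - q) * μ ^ 2 / ς ^ 2) * Real.exp (-2 * α₄ * t) /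
        ((α₄ + α₁) * (α₄ + α₁ + (α₄ - α₁) * Real.exp (-2 * α₄ * t))) := by
    intro t
    have hE0 : 0 < Real.exp (-2 * α₄ * t) := Real.exp_pos _
    have hD : 0 < α₄ + α₁ + (α₄ - α₁) * Real.exp (-2 * α₄ * t) := by
      have : 0 < (α₄ - α₁) * Real.exp (-2 * α₄ * t) := mul_pos hdiff hE0
      linarith
    have hB' : B = (q * (1 - q) * μ ^ 2 / ς ^ 2) / (α₄ + α₁) := by
      rw [hB, div_eq_div_iff hα₂pos.ne' hsum.ne']
      linear_combination -hkey2
    rw [hβ, hB']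
    rw [div_sub_div _ _ hsum.ne' hD.ne', div_eq_div_iff (mul_pos hsum hD).ne' (mul_pos hsum hD).ne']
    ring
  have hbound : ∀ t ≥ (0 : ℝ), 0 ≤ B - β t ∧
      B - β t ≤ (2 * α₄ * (α₄ - α₁) / (α₂ * (α₄ + α₁))) * Real.exp (-2 * α₄ * t) := by
    intro t ht
    set E := Real.exp (-2 * α₄ * t)
    have hE0 : 0 < E := Real.exp_pos _
    have hD : 0 < α₄ + α₁ + (α₄ - α₁) * E := by
      have : 0 < (α₄ - α₁) * E := mul_pos hdiff hE0
      linarith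
    have hnum : 0 ≤ 2 * α₄ * (q * (1 - q) * μ ^ 2 / ς ^ 2) * E :=
      mul_nonneg (mul_nonneg (by linarith) hc.le) hE0.le
    constructor
    · rw [hform t]
      exact div_nonneg hnum (mul_pos hsum hD).le
    · rw [hform t]
      have h1 : 2 * α₄ * (q * (1 - q) * μ ^ 2 / ς ^ 2) * E /
          ((α₄ + α₁) * (α₄ + α₁ + (α₄ - α₁) * E)) ≤
          2 * α₄ * (α₄ - α₁) * E / (α₂ * (α₄ + α₁)) := by
        rw [div_le_div_iff₀ (mul_pos hsum hD) (mul_pos hα₂pos hsum)]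
        calc 2 * α₄ * (q * (1 - q) * μ ^ 2 / ς ^ 2) * E * (α₂ * (α₄ + α₁))
            = 2 * α₄ * E * (α₄ + α₁) * (α₂ * (q * (1 - q) * μ ^ 2 / ς ^ 2)) := by ring
          _ = 2 * α₄ * E * (α₄ + α₁) * ((α₄ - α₁) * (α₄ + α₁)) := by rw [hkey2]
          _ ≤ 2 * α₄ * (α₄ - α₁) * E * ((α₄ + α₁) * (α₄ + α₁ + (α₄ - α₁) * E)) := by
              nlinarith [mul_nonneg (mul_nonneg (mul_nonneg (mul_nonneg (mul_nonneg
                (by linarith : (0:ℝ) ≤ 2 * α₄) hdiff.le) hE0.le) hsum.le) hdiff.le) hE0.le]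
      calc 2 * α₄ * (q * (1 - q) * μ ^ 2 / ς ^ 2) * E /
          ((α₄ + α₁) * (α₄ + α₁ + (α₄ - α₁) * E)) ≤
          2 * α₄ * (α₄ - α₁) * E / (α₂ * (α₄ + α₁)) := h1
        _ = 2 * α₄ * (α₄ - α₁) / (α₂ * (α₄ + α₁)) * E := by ring
  refine ⟨hbound, ?_⟩
  have hlin : Tendsto (fun t : ℝ => -2 * α₄ * t) atTop atBot :=
    (tendsto_const_mul_atBot_of_neg (l := atTop) (f := fun t : ℝ => t) (r := -2 * α₄)
      (by linarith)).mpr tendsto_id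
  have hexp : Tendsto (fun t : ℝ => Real.exp (-2 * α₄ * t)) atTop (𝓝 0) :=
    Real.tendsto_exp_atBot.comp hlin
  have hg : Tendsto (fun t : ℝ => (2 * α₄ * (α₄ - α₁) / (α₂ * (α₄ + α₁))) *
      Real.exp (-2 * α₄ * t)) atTop (𝓝 0) := by
    simpa using hexp.const_mul (2 * α₄ * (α₄ - α₁) / (α₂ * (α₄ + α₁)))
  have h0 : Tendsto (fun t => B - β t) atTop (𝓝 0) :=
    squeeze_zero' (eventually_atTop.mpr ⟨0, fun t ht => (hbound t ht).1⟩)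
      (eventually_atTop.mpr ⟨0, fun t ht => (hbound t ht).2⟩) hg
  have h2 := (tendsto_const_nhds : Tendsto (fun _ : ℝ => B) atTop (𝓝 B)).sub h0
  simp only [sub_sub_cancel, sub_zero] at h2
  exact h2
end

section
/- Define φ(x) = exp(−(1/2)B·x² − C·x) and λ = −(1/2)α₂C² + α₃C + (1/2)σ²B, where σ² := σ₁² + σ₂². Then for every x ∈ ℝ: (1/2)σ²·φ''(x) + (α₃ − α₁x)·φ'(x) − (1/2)q(1−q)(μ²x²/ς²)·φ(x) + (qσ₂²/(2(1−q)))·φ'(x)²/φ(x) = −λ·φ(x). -/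
/-!
The ansatz `φ = exp g` with `g x = -(1/2)Bx² - Cx` turns the ergodic HJB equation, after division
by `φ > 0`, into a polynomial identity of degree two in `x`, since `φ'/φ = g'` and `φ''/φ = g'' + g'²`.
Because `(1/2)σ² + qσ₂²/(2(1-q)) = (1/2)α₂`, its `x²`-coefficient is the Riccati equation
`α₂B² + 2α₁B - q(1-q)μ²/ς² = 0`, solved by the positive root `B = (α₄ - α₁)/α₂`; its `x`-coefficient is
the linear equation `(α₂B + α₁)C = α₃B`, i.e. `α₄C = α₃B`; the constant term defines `λ`.
-/

open Real

noncomputable def gaussianAnsatz (B C x : ℝ) : ℝ := exp (-(1 / 2) * B * x ^ 2 - C * x)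

lemma gaussianAnsatz_pos (B C x : ℝ) : 0 < gaussianAnsatz B C x := exp_pos _

lemma hasDerivAt_gaussianAnsatz (B C x : ℝ) :
    HasDerivAt (gaussianAnsatz B C) (-(B * x + C) * gaussianAnsatz B C x) x := by
  have hg : HasDerivAt (fun x : ℝ => -(1 / 2) * B * x ^ 2 - C * x) (-(B * x + C)) x := by
    refine (((hasDerivAt_pow 2 x).const_mul (-(1 / 2) * B)).fun_sub
      ((hasDerivAt_id' x).const_mul C)).congr_deriv ?_
    ring
  rw [mul_comm]
  exact hg.exp

lemma deriv_gaussianAnsatz (B C : ℝ) :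
    deriv (gaussianAnsatz B C) = fun x => -(B * x + C) * gaussianAnsatz B C x :=
  funext fun x => (hasDerivAt_gaussianAnsatz B C x).deriv

lemma deriv_deriv_gaussianAnsatz (B C x : ℝ) :
    deriv (deriv (gaussianAnsatz B C)) x = ((B * x + C) ^ 2 - B) * gaussianAnsatz B C x := by
  have hlin : HasDerivAt (fun x : ℝ => -(B * x + C)) (-B) x := by
    simpa using (((hasDerivAt_id x).const_mul B).add_const C).fun_neg
  rw [deriv_gaussianAnsatz, (hlin.fun_mul (hasDerivAt_gaussianAnsatz B C x)).deriv]
  ring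

theorem gaussianAnsatz_solves_ergodic_hjb {s κ a₁ a₃ c B C : ℝ}
    (hB : (s + 2 * κ) * B ^ 2 + 2 * a₁ * B - c = 0)
    (hC : (s + 2 * κ) * B * C + a₁ * C - a₃ * B = 0) (x : ℝ) :
    (1 / 2) * s * deriv (deriv (gaussianAnsatz B C)) x
        + (a₃ - a₁ * x) * deriv (gaussianAnsatz B C) x
        - (1 / 2) * c * x ^ 2 * gaussianAnsatz B C x
        + κ * deriv (gaussianAnsatz B C) x ^ 2 / gaussianAnsatz B C x
      = -(-(1 / 2) * (s + 2 * κ) * C ^ 2 + a₃ * C + (1 / 2) * s * B) * gaussianAnsatz B C x := by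
  set φ := gaussianAnsatz B C x with hφ
  have hquot : κ * (-(B * x + C) * φ) ^ 2 / φ = κ * (B * x + C) ^ 2 * φ := by
    field_simp [(gaussianAnsatz_pos B C x).ne']
  rw [deriv_deriv_gaussianAnsatz, deriv_gaussianAnsatz, ← hφ, hquot]
  linear_combination (x ^ 2 / 2 * φ) * hB + (x * φ) * hC

lemma quadratic_eq_zero_of_sq_eq {a₁ a₂ a₄ c : ℝ} (ha₂ : a₂ ≠ 0) (ha₄ : a₄ ^ 2 = a₁ ^ 2 + a₂ * c) :
    a₂ * ((a₄ - a₁) / a₂) ^ 2 + 2 * a₁ * ((a₄ - a₁) / a₂) - c = 0 := by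
  field_simp
  linear_combination ha₄

lemma linear_eq_zero_of_quadratic_root {a₁ a₂ a₃ a₄ : ℝ} (ha₂ : a₂ ≠ 0) (ha₄ : a₄ ≠ 0) :
    a₂ * ((a₄ - a₁) / a₂) * (a₃ * (a₄ - a₁) / (a₂ * a₄)) + a₁ * (a₃ * (a₄ - a₁) / (a₂ * a₄))
      - a₃ * ((a₄ - a₁) / a₂) = 0 := by
  field_simp
  ring

theorem stmt7_general (μ ς σ ρ q : ℝ)
    (hμ : μ ≠ 0) (hς : 0 < ς) (hσ : 0 < σ)
    (hρ : ρ ∈ Set.Ioo (-1 : ℝ) 1) (hq : q ∈ Set.Ioo (0 : ℝ) 1)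
    (σ₁ σ₂ α₁ α₂ α₃ α₄ B C lam : ℝ)
    (hσ₂ : σ₂ = Real.sqrt (1 - ρ ^ 2) * σ)
    (hα₂ : α₂ = σ₁ ^ 2 + σ₂ ^ 2 / (1 - q))
    (hα₄ : α₄ = Real.sqrt (α₁ ^ 2 + q * (1 - q) * α₂ * μ ^ 2 / ς ^ 2))
    (hB : B = (α₄ - α₁) / α₂) (hC : C = α₃ * (α₄ - α₁) / (α₂ * α₄))
    (hlam : lam = -(1 / 2) * α₂ * C ^ 2 + α₃ * C + (1 / 2) * (σ₁ ^ 2 + σ₂ ^ 2) * B)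
    (φ : ℝ → ℝ) (hφ : ∀ x, φ x = Real.exp (-(1 / 2) * B * x ^ 2 - C * x)) :
    ∀ x, (1 / 2) * (σ₁ ^ 2 + σ₂ ^ 2) * deriv (deriv φ) x + (α₃ - α₁ * x) * deriv φ x
        - (1 / 2) * q * (1 - q) * (μ ^ 2 * x ^ 2 / ς ^ 2) * φ x
        + (q * σ₂ ^ 2 / (2 * (1 - q))) * (deriv φ x) ^ 2 / φ x
      = -lam * φ x := by
  obtain ⟨hq₀, hq₁⟩ := hq
  have h1q : 0 < 1 - q := by linarith
  have hσ₂pos : 0 < σ₂ := by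
    rw [hσ₂]
    exact mul_pos (sqrt_pos.mpr (by nlinarith [hρ.1, hρ.2])) hσ
  have hα₂pos : 0 < α₂ := by
    rw [hα₂]
    exact add_pos_of_nonneg_of_pos (sq_nonneg σ₁) (div_pos (pow_pos hσ₂pos 2) h1q)
  have hα₄sq : α₄ ^ 2 = α₁ ^ 2 + α₂ * (q * (1 - q) * μ ^ 2 / ς ^ 2) := by
    rw [hα₄, sq_sqrt (by positivity)]
    ring
  have hα₄pos : 0 < α₄ := by
    rw [hα₄]
    exact sqrt_pos.mpr (by positivity)
  have hα₂split : α₂ = σ₁ ^ 2 + σ₂ ^ 2 + 2 * (q * σ₂ ^ 2 / (2 * (1 - q))) := by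
    rw [hα₂]
    field_simp
    ring
  obtain rfl : φ = gaussianAnsatz B C := funext hφ
  intro x
  have hhjb := gaussianAnsatz_solves_ergodic_hjb (c := q * (1 - q) * μ ^ 2 / ς ^ 2)
    (hα₂split ▸ hB ▸ quadratic_eq_zero_of_sq_eq hα₂pos.ne' hα₄sq)
    (hα₂split ▸ hB ▸ hC ▸ linear_eq_zero_of_quadratic_root (a₃ := α₃) hα₂pos.ne' hα₄pos.ne') x
  rw [hlam, hα₂split]
  linear_combination hhjb

/-- Kim–Omberg model: `(λ, φ)` with `φ(x) = exp(-(1/2)Bx² - Cx)` and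
`λ = -(1/2)α₂C² + α₃C + (1/2)σ²B` solves the ergodic HJB equation
`(1/2)σ²φ'' + (α₃-α₁x)φ' - (1/2)q(1-q)(μ²x²/ς²)φ + (qσ₂²/(2(1-q)))φ'²/φ = -λφ`. -/
theorem stmt7 (k m μ ς σ ρ q : ℝ)
    (hk : 0 < k) (hμ : μ ≠ 0) (hς : 0 < ς) (hσ : 0 < σ)
    (hρ : ρ ∈ Set.Ioo (-1 : ℝ) 1) (hq : q ∈ Set.Ioo (0 : ℝ) 1)
    (σ₁ σ₂ α₁ α₂ α₃ α₄ B C lam : ℝ)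
    (hσ₁ : σ₁ = ρ * σ) (hσ₂ : σ₂ = Real.sqrt (1 - ρ ^ 2) * σ)
    (hα₁ : α₁ = k + q * μ * σ₁ / ς) (hα₂ : α₂ = σ₁ ^ 2 + σ₂ ^ 2 / (1 - q))
    (hα₃ : α₃ = k * m)
    (hα₄ : α₄ = Real.sqrt (α₁ ^ 2 + q * (1 - q) * α₂ * μ ^ 2 / ς ^ 2))
    (hB : B = (α₄ - α₁) / α₂) (hC : C = α₃ * (α₄ - α₁) / (α₂ * α₄))
    (hlam : lam = -(1 / 2) * α₂ * C ^ 2 + α₃ * C + (1 / 2) * (σ₁ ^ 2 + σ₂ ^ 2) * B)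
    (φ : ℝ → ℝ) (hφ : ∀ x, φ x = Real.exp (-(1 / 2) * B * x ^ 2 - C * x)) :
    ∀ x, (1 / 2) * (σ₁ ^ 2 + σ₂ ^ 2) * deriv (deriv φ) x + (α₃ - α₁ * x) * deriv φ x
        - (1 / 2) * q * (1 - q) * (μ ^ 2 * x ^ 2 / ς ^ 2) * φ x
        + (q * σ₂ ^ 2 / (2 * (1 - q))) * (deriv φ x) ^ 2 / φ x
      = -lam * φ x :=
  stmt7_general μ ς σ ρ q hμ hς hσ hρ hq σ₁ σ₂ α₁ α₂ α₃ α₄ B C lam hσ₂ hα₂ hα₄ hB hC hlam φ hφ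
end

section
/- Let β, γ, Λ : [0,∞) → ℝ be differentiable and satisfy β'(t) = −α₂β(t)² − 2α₁β(t) + q(1−q)μ²/ς², γ'(t) = −(α₁ + α₂β(t))γ(t) + α₃β(t), and Λ'(t) = (1/2)α₂γ(t)² − α₃γ(t) − (1/2)σ²β(t), where σ² := σ₁² + σ₂². Then the function v(x,t) := exp(Λ(t) − (1/2)β(t)x² − γ(t)x) satisfies, for all x ∈ ℝ and t ≥ 0, the Hamilton–Jacobi–Bellman equation ∂ₜv = (1/2)σ²·∂ₓₓv + (α₃ − α₁x)·∂ₓv − (1/2)q(1−q)(μ²x²/ς²)·v + (qσ₂²/(2(1−q)))·(∂ₓv)²/v. -/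
/-!
Writing `v = exp f` with `f = Λ - ½βx² - γx`, one has `v_x = f_x v`, `v_xx = (f_xx + f_x²) v`
and `(v_x)²/v = f_x² v`, so after division by `v` the HJB equation becomes an identity between
quadratic polynomials in `x`. The coefficient of `f_x²` is `½(σ₁² + σ₂²) + qσ₂²/(2(1-q)) = ½α₂`,
and comparing the coefficients of `x²`, `x` and `1` gives exactly the Riccati equations for
`β`, `γ` and `Λ`.
-/

open Real

noncomputable def expQuad (l a b x : ℝ) : ℝ := exp (l - 1 / 2 * a * x ^ 2 - b * x)

theorem expQuad_ne_zero (l a b x : ℝ) : expQuad l a b x ≠ 0 := (exp_pos _).ne'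

theorem hasDerivAt_expQuad (l a b x : ℝ) :
    HasDerivAt (expQuad l a b) (-(a * x + b) * expQuad l a b x) x := by
  have hexponent : HasDerivAt (fun y => l - 1 / 2 * a * y ^ 2 - b * y) (-(a * x + b)) x := by
    refine ((((hasDerivAt_pow 2 x).const_mul (1 / 2 * a)).const_sub l).sub
      ((hasDerivAt_id x).const_mul b)).congr_deriv ?_
    simp only [Nat.cast_ofNat]
    ring
  exact hexponent.exp.congr_deriv (mul_comm _ _)

theorem deriv_expQuad (l a b : ℝ) :
    deriv (expQuad l a b) = fun x => -(a * x + b) * expQuad l a b x :=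
  funext fun x => (hasDerivAt_expQuad l a b x).deriv

theorem deriv_deriv_expQuad (l a b x : ℝ) :
    deriv (deriv (expQuad l a b)) x = ((a * x + b) ^ 2 - a) * expQuad l a b x := by
  have hlinear : HasDerivAt (fun y => -(a * y + b)) (-a) x := by
    simpa using (((hasDerivAt_id x).const_mul a).add_const b).fun_neg
  rw [deriv_expQuad]
  exact (hlinear.mul (hasDerivAt_expQuad l a b x)).deriv.trans (by ring)

theorem HasDerivAt.expQuad_comp {l a b : ℝ → ℝ} {l' a' b' t : ℝ} (hl : HasDerivAt l l' t)
    (ha : HasDerivAt a a' t) (hb : HasDerivAt b b' t) (x : ℝ) :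
    HasDerivAt (fun τ => expQuad (l τ) (a τ) (b τ) x)
      ((l' - 1 / 2 * a' * x ^ 2 - b' * x) * expQuad (l t) (a t) (b t) x) t :=
  ((hl.sub ((ha.const_mul (1 / 2)).mul_const (x ^ 2))).sub (hb.mul_const x)).exp.congr_deriv
    (mul_comm _ _)

theorem stmt8_general (μ ς q : ℝ)
    (hq : q ∈ Set.Ioo (0 : ℝ) 1)
    (σ₁ σ₂ α₁ α₂ α₃ : ℝ)
    (hα₂ : α₂ = σ₁ ^ 2 + σ₂ ^ 2 / (1 - q))
    (β γ Lam : ℝ → ℝ)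
    (hβ : ∀ t, 0 ≤ t → HasDerivAt β
      (-α₂ * (β t) ^ 2 - 2 * α₁ * β t + q * (1 - q) * μ ^ 2 / ς ^ 2) t)
    (hγ : ∀ t, 0 ≤ t → HasDerivAt γ (-(α₁ + α₂ * β t) * γ t + α₃ * β t) t)
    (hLam : ∀ t, 0 ≤ t → HasDerivAt Lam
      ((1 / 2) * α₂ * (γ t) ^ 2 - α₃ * γ t - (1 / 2) * (σ₁ ^ 2 + σ₂ ^ 2) * β t) t)
    (v : ℝ → ℝ → ℝ)
    (hv : ∀ x t, v x t = Real.exp (Lam t - (1 / 2) * β t * x ^ 2 - γ t * x)) :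
    ∀ x t, 0 ≤ t →
      deriv (fun τ => v x τ) t =
        (1 / 2) * (σ₁ ^ 2 + σ₂ ^ 2) * deriv (deriv (fun y => v y t)) x
        + (α₃ - α₁ * x) * deriv (fun y => v y t) x
        - (1 / 2) * q * (1 - q) * (μ ^ 2 * x ^ 2 / ς ^ 2) * v x t
        + (q * σ₂ ^ 2 / (2 * (1 - q))) * (deriv (fun y => v y t) x) ^ 2 / v x t := by
  intro x t ht
  obtain rfl : v = fun x t => expQuad (Lam t) (β t) (γ t) x := funext₂ hv
  rw [((hLam t ht).expQuad_comp (hβ t ht) (hγ t ht) x).deriv, deriv_deriv_expQuad,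
    deriv_expQuad]
  have hq₁ : 1 - q ≠ 0 := (sub_pos.2 hq.2).ne'
  have hv₀ := expQuad_ne_zero (Lam t) (β t) (γ t) x
  subst hα₂
  field_simp
  ring

/-- Kim–Omberg model: if `β, γ, Λ` solve the Riccati-type ODE system, then
`v(x,t) = exp(Λ(t) - (1/2)β(t)x² - γ(t)x)` solves the reduced dual HJB equation
`∂ₜv = (1/2)σ²∂ₓₓv + (α₃-α₁x)∂ₓv - (1/2)q(1-q)(μ²x²/ς²)v + (qσ₂²/(2(1-q)))(∂ₓv)²/v`. -/
theorem stmt8 (k m μ ς σ ρ q : ℝ)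
    (hk : 0 < k) (hμ : μ ≠ 0) (hς : 0 < ς) (hσ : 0 < σ)
    (hρ : ρ ∈ Set.Ioo (-1 : ℝ) 1) (hq : q ∈ Set.Ioo (0 : ℝ) 1)
    (σ₁ σ₂ α₁ α₂ α₃ α₄ : ℝ)
    (hσ₁ : σ₁ = ρ * σ) (hσ₂ : σ₂ = Real.sqrt (1 - ρ ^ 2) * σ)
    (hα₁ : α₁ = k + q * μ * σ₁ / ς) (hα₂ : α₂ = σ₁ ^ 2 + σ₂ ^ 2 / (1 - q))
    (hα₃ : α₃ = k * m)
    (hα₄ : α₄ = Real.sqrt (α₁ ^ 2 + q * (1 - q) * α₂ * μ ^ 2 / ς ^ 2))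
    (β γ Lam : ℝ → ℝ)
    (hβ : ∀ t, 0 ≤ t → HasDerivAt β
      (-α₂ * (β t) ^ 2 - 2 * α₁ * β t + q * (1 - q) * μ ^ 2 / ς ^ 2) t)
    (hγ : ∀ t, 0 ≤ t → HasDerivAt γ (-(α₁ + α₂ * β t) * γ t + α₃ * β t) t)
    (hLam : ∀ t, 0 ≤ t → HasDerivAt Lam
      ((1 / 2) * α₂ * (γ t) ^ 2 - α₃ * γ t - (1 / 2) * (σ₁ ^ 2 + σ₂ ^ 2) * β t) t)
    (v : ℝ → ℝ → ℝ)
    (hv : ∀ x t, v x t = Real.exp (Lam t - (1 / 2) * β t * x ^ 2 - γ t * x)) :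
    ∀ x t, 0 ≤ t →
      deriv (fun τ => v x τ) t =
        (1 / 2) * (σ₁ ^ 2 + σ₂ ^ 2) * deriv (deriv (fun y => v y t)) x
        + (α₃ - α₁ * x) * deriv (fun y => v y t) x
        - (1 / 2) * q * (1 - q) * (μ ^ 2 * x ^ 2 / ς ^ 2) * v x t
        + (q * σ₂ ^ 2 / (2 * (1 - q))) * (deriv (fun y => v y t) x) ^ 2 / v x t :=
  stmt8_general μ ς q hq σ₁ σ₂ α₁ α₂ α₃ hα₂ β γ Lam hβ hγ hLam v hv
end

section
/- Define β(t) = q(1−q)(μ²/ς²)·sinh(β₂t/2) / (β₂·cosh(β₂t/2) + β₁·sinh(β₂t/2)) for t ≥ 0. Then the denominator β₂·cosh(β₂t/2) + β₁·sinh(β₂t/2) is strictly positive for every t ≥ 0, β(0) = 0, and β satisfies the Riccati equation β'(t) = −(σ²(1−qρ²)/(2(1−q)))·β(t)² − β₁·β(t) + q(1−q)μ²/(2ς²) for all t ≥ 0. -/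
/-!
With `s, c = sinh (β₂ t / 2), cosh (β₂ t / 2)`, `D = β₂ c + β₁ s`, `A = q(1-q)μ²/ς²` and `C` the
coefficient of `β²`, the quotient rule gives `β' = A β₂² (c² - s²) / (2 D²)`, while the right-hand
side of the Riccati equation is `A (β₂² c² - (β₁² + 2 C A) s²) / (2 D²)`; the two agree because
`β₂² = β₁² + 2 C A`. The denominator is positive since
`2 D = (β₂ + β₁) e^{β₂t/2} + (β₂ - β₁) e^{-β₂t/2}` and `β₂ > |β₁|`.
-/

open Real

lemma mul_cosh_add_mul_sinh_pos {a b : ℝ} (hab : |b| < a) (x : ℝ) :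
    0 < a * cosh x + b * sinh x := by
  obtain ⟨hlo, hhi⟩ := abs_lt.mp hab
  rw [cosh_eq, sinh_eq]
  nlinarith [exp_pos x, exp_pos (-x)]

noncomputable def riccatiSinhRatio (A b₁ b₂ t : ℝ) : ℝ :=
  A * sinh (b₂ * t / 2) / (b₂ * cosh (b₂ * t / 2) + b₁ * sinh (b₂ * t / 2))

lemma hasDerivAt_riccatiSinhRatio {A C b₁ b₂ t : ℝ} (hdisc : b₂ ^ 2 = b₁ ^ 2 + 2 * C * A)
    (hD : b₂ * cosh (b₂ * t / 2) + b₁ * sinh (b₂ * t / 2) ≠ 0) :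
    HasDerivAt (riccatiSinhRatio A b₁ b₂)
      (-C * riccatiSinhRatio A b₁ b₂ t ^ 2 - b₁ * riccatiSinhRatio A b₁ b₂ t + A / 2) t := by
  have hu : HasDerivAt (fun t : ℝ => b₂ * t / 2) (b₂ / 2) t := by
    simpa using ((hasDerivAt_id t).const_mul b₂).div_const 2
  have hquot := (hu.sinh.const_mul A).div ((hu.cosh.const_mul b₂).add (hu.sinh.const_mul b₁)) hD
  refine hquot.congr_deriv ?_
  simp only [riccatiSinhRatio, Pi.add_apply]
  field_simp
  linear_combination (-A * sinh (b₂ * t / 2) ^ 2) * hdisc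

theorem stmt10_general (μ ς σ ρ q : ℝ)
    (hμ : μ ≠ 0) (hς : 0 < ς) (hσ : 0 < σ)
    (hρ : ρ ∈ Set.Ioo (-1 : ℝ) 1) (hq : q ∈ Set.Ioo (0 : ℝ) 1)
    (β₁ β₂ : ℝ)
    (hβ₂ : β₂ = Real.sqrt (β₁ ^ 2 + q * (1 - q * ρ ^ 2) * μ ^ 2 * σ ^ 2 / ς ^ 2))
    (β : ℝ → ℝ)
    (hβ : ∀ t, β t = q * (1 - q) * (μ ^ 2 / ς ^ 2) * Real.sinh (β₂ * t / 2) /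
        (β₂ * Real.cosh (β₂ * t / 2) + β₁ * Real.sinh (β₂ * t / 2))) :
    (∀ t ≥ (0 : ℝ), 0 < β₂ * Real.cosh (β₂ * t / 2) + β₁ * Real.sinh (β₂ * t / 2)) ∧
    β 0 = 0 ∧
    (∀ t ≥ (0 : ℝ), HasDerivAt β
      (-(σ ^ 2 * (1 - q * ρ ^ 2) / (2 * (1 - q))) * (β t) ^ 2 - β₁ * β t
        + q * (1 - q) * μ ^ 2 / (2 * ς ^ 2)) t) := by
  obtain ⟨hq0, hq1⟩ := hq
  have hqρ : 0 < 1 - q * ρ ^ 2 := by nlinarith [abs_lt.mpr hρ, sq_abs ρ, abs_nonneg ρ]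
  have hgap : 0 < q * (1 - q * ρ ^ 2) * μ ^ 2 * σ ^ 2 / ς ^ 2 := by positivity
  have hβ₁β₂ : |β₁| < β₂ := by
    rw [hβ₂, Real.lt_sqrt (abs_nonneg β₁), sq_abs]
    linarith
  have hdisc : β₂ ^ 2 = β₁ ^ 2 + 2 * (σ ^ 2 * (1 - q * ρ ^ 2) / (2 * (1 - q))) *
      (q * (1 - q) * (μ ^ 2 / ς ^ 2)) := by
    rw [hβ₂, Real.sq_sqrt (by positivity)]
    field_simp [(by linarith : (1 : ℝ) - q ≠ 0)]
  refine ⟨fun t _ => mul_cosh_add_mul_sinh_pos hβ₁β₂ _, by simp [hβ], fun t _ => ?_⟩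
  rw [show β = riccatiSinhRatio (q * (1 - q) * (μ ^ 2 / ς ^ 2)) β₁ β₂ from funext hβ]
  exact (hasDerivAt_riccatiSinhRatio hdisc (mul_cosh_add_mul_sinh_pos hβ₁β₂ _).ne').congr_deriv
    (by ring)

/-- Heston model: the function
`β(t) = q(1-q)(μ²/ς²)·sinh(β₂t/2)/(β₂cosh(β₂t/2)+β₁sinh(β₂t/2))` has strictly positive
denominator for `t ≥ 0`, satisfies `β(0) = 0`, and solves the Riccati equation
`β' = -(σ²(1-qρ²)/(2(1-q)))β² - β₁β + q(1-q)μ²/(2ς²)` on `[0,∞)`. -/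
theorem stmt10 (k m μ ς σ ρ q : ℝ)
    (hk : 0 < k) (hm : 0 < m) (hμ : μ ≠ 0) (hς : 0 < ς) (hσ : 0 < σ)
    (hρ : ρ ∈ Set.Ioo (-1 : ℝ) 1) (hq : q ∈ Set.Ioo (0 : ℝ) 1)
    (β₁ β₂ : ℝ)
    (hβ₁ : β₁ = k + q * μ * ρ * σ / ς)
    (hβ₂ : β₂ = Real.sqrt (β₁ ^ 2 + q * (1 - q * ρ ^ 2) * μ ^ 2 * σ ^ 2 / ς ^ 2))
    (β : ℝ → ℝ)
    (hβ : ∀ t, β t = q * (1 - q) * (μ ^ 2 / ς ^ 2) * Real.sinh (β₂ * t / 2) /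
        (β₂ * Real.cosh (β₂ * t / 2) + β₁ * Real.sinh (β₂ * t / 2))) :
    (∀ t ≥ (0 : ℝ), 0 < β₂ * Real.cosh (β₂ * t / 2) + β₁ * Real.sinh (β₂ * t / 2)) ∧
    β 0 = 0 ∧
    (∀ t ≥ (0 : ℝ), HasDerivAt β
      (-(σ ^ 2 * (1 - q * ρ ^ 2) / (2 * (1 - q))) * (β t) ^ 2 - β₁ * β t
        + q * (1 - q) * μ ^ 2 / (2 * ς ^ 2)) t) :=
  stmt10_general μ ς σ ρ q hμ hς hσ hρ hq β₁ β₂ hβ₂ β hβ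
end

section
/- With β(t) = q(1−q)(μ²/ς²)·sinh(β₂t/2) / (β₂·cosh(β₂t/2) + β₁·sinh(β₂t/2)), one has 0 ≤ β(t) ≤ B for every t ≥ 0, and β(t) → B as t → ∞. -/
/-!
With `x = β₂ t / 2` and `A = q (1 - q) μ² / ς²`, `β t = A sinh x / (β₂ cosh x + β₁ sinh x)`.
Since `β₂² - β₁² = q (1 - q ρ²) μ² σ² / ς² > 0`, we have `β₂ > |β₁|`: the denominator is
positive for `x ≥ 0`, `B = A / (β₁ + β₂)`, and `β t ≤ B` reduces to `sinh x ≤ cosh x`.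
Dividing through by `cosh x` gives `β t = A tanh x / (β₂ + β₁ tanh x) → A / (β₂ + β₁)`.
-/

open Filter Topology

namespace Real

theorem tendsto_tanh_atTop : Tendsto tanh atTop (𝓝 1) := by
  have hexp : Tendsto (fun x => exp (-(2 * x))) atTop (𝓝 0) :=
    tendsto_exp_atBot.comp (tendsto_neg_atTop_atBot.comp (tendsto_id.const_mul_atTop two_pos))
  have htanh : ∀ x, tanh x = (1 - exp (-(2 * x))) / (1 + exp (-(2 * x))) := by
    intro x
    rw [tanh_eq_sinh_div_cosh, sinh_eq, cosh_eq, show -(2 * x) = -x + -x by ring, exp_add,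
      exp_neg]
    field_simp
  have hlim : Tendsto (fun x => (1 - exp (-(2 * x))) / (1 + exp (-(2 * x)))) atTop
      (𝓝 ((1 - 0) / (1 + 0))) :=
    (tendsto_const_nhds.sub hexp).div (tendsto_const_nhds.add hexp) (by norm_num)
  simpa using hlim.congr fun x => (htanh x).symm

section SinhRatio

variable {A a b x : ℝ}

theorem mul_cosh_add_mul_sinh_pos (hb : 0 < b) (hab : 0 < a + b) (hx : 0 ≤ x) :
    0 < b * cosh x + a * sinh x := by
  have hsinh : 0 ≤ sinh x := sinh_nonneg_iff.mpr hx
  nlinarith [sinh_lt_cosh x, mul_nonneg hab.le hsinh]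

theorem mul_sinh_div_mul_cosh_add_mul_sinh_le (hA : 0 ≤ A) (hb : 0 < b) (hab : 0 < a + b)
    (hx : 0 ≤ x) : A * sinh x / (b * cosh x + a * sinh x) ≤ A / (a + b) := by
  rw [div_le_div_iff₀ (mul_cosh_add_mul_sinh_pos hb hab hx) hab]
  nlinarith [mul_nonneg (mul_nonneg hA hb.le) (sub_nonneg.mpr (sinh_lt_cosh x).le)]

theorem tendsto_mul_sinh_div_mul_cosh_add_mul_sinh (hab : a + b ≠ 0) :
    Tendsto (fun x => A * sinh x / (b * cosh x + a * sinh x)) atTop (𝓝 (A / (a + b))) := by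
  have hlim : Tendsto (fun x => A * tanh x / (b + a * tanh x)) atTop
      (𝓝 (A * 1 / (b + a * 1))) :=
    (tendsto_tanh_atTop.const_mul A).div
      (tendsto_const_nhds.add (tendsto_tanh_atTop.const_mul a)) (by rwa [mul_one, add_comm])
  rw [mul_one, mul_one, add_comm] at hlim
  refine hlim.congr fun x => ?_
  rw [tanh_eq_sinh_div_cosh, ← div_div_div_cancel_right₀ (cosh_pos x).ne' (A * sinh x)]
  field_simp

end SinhRatio

section SqrtSqAdd

variable {a c : ℝ}

theorem sqrt_sq_add_pos (hc : 0 < c) : 0 < √(a ^ 2 + c) :=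
  sqrt_pos.mpr (by positivity)

theorem add_sqrt_sq_add_pos (hc : 0 < c) : 0 < a + √(a ^ 2 + c) := by
  have : |a| < √(a ^ 2 + c) := by
    rw [← sqrt_sq_eq_abs]; exact sqrt_lt_sqrt (sq_nonneg a) (by linarith)
  linarith [neg_abs_le a]

theorem sqrt_sq_add_sub_mul_add_sqrt (hc : 0 ≤ c) :
    (√(a ^ 2 + c) - a) * (a + √(a ^ 2 + c)) = c := by
  linear_combination sq_sqrt (by positivity : 0 ≤ a ^ 2 + c)

end SqrtSqAdd

end Real

theorem stmt11_general (μ ς σ ρ q : ℝ)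
    (hμ : μ ≠ 0) (hς : 0 < ς) (hσ : 0 < σ)
    (hρ : ρ ∈ Set.Ioo (-1 : ℝ) 1) (hq : q ∈ Set.Ioo (0 : ℝ) 1)
    (β₁ β₂ B : ℝ)
    (hβ₂ : β₂ = Real.sqrt (β₁ ^ 2 + q * (1 - q * ρ ^ 2) * μ ^ 2 * σ ^ 2 / ς ^ 2))
    (hB : B = (1 - q) * (β₂ - β₁) / ((1 - q * ρ ^ 2) * σ ^ 2))
    (β : ℝ → ℝ)
    (hβ : ∀ t, β t = q * (1 - q) * (μ ^ 2 / ς ^ 2) * Real.sinh (β₂ * t / 2) /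
        (β₂ * Real.cosh (β₂ * t / 2) + β₁ * Real.sinh (β₂ * t / 2))) :
    (∀ t ≥ (0 : ℝ), 0 ≤ β t ∧ β t ≤ B) ∧
    Tendsto β atTop (𝓝 B) := by
  obtain ⟨hq0, hq1⟩ := hq
  have hqρ : 0 < 1 - q * ρ ^ 2 := by nlinarith [hρ.1, hρ.2]
  have hA : 0 ≤ q * (1 - q) * (μ ^ 2 / ς ^ 2) :=
    mul_nonneg (mul_nonneg hq0.le (sub_nonneg.mpr hq1.le)) (by positivity)
  have hc : 0 < q * (1 - q * ρ ^ 2) * μ ^ 2 * σ ^ 2 / ς ^ 2 := by positivity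
  have hβ₂pos : 0 < β₂ := hβ₂ ▸ Real.sqrt_sq_add_pos hc
  have hsum : 0 < β₁ + β₂ := hβ₂ ▸ Real.add_sqrt_sq_add_pos hc
  have hprod : (β₂ - β₁) * (β₁ + β₂) = q * (1 - q * ρ ^ 2) * μ ^ 2 * σ ^ 2 / ς ^ 2 :=
    hβ₂ ▸ Real.sqrt_sq_add_sub_mul_add_sqrt hc.le
  have hBA : B = q * (1 - q) * (μ ^ 2 / ς ^ 2) / (β₁ + β₂) := by
    rw [hB, div_eq_div_iff (by positivity) hsum.ne']
    linear_combination (1 - q) * hprod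
  refine ⟨fun t ht => ?_, ?_⟩
  · have hx : 0 ≤ β₂ * t / 2 := by positivity
    rw [hβ, hBA]
    exact ⟨div_nonneg (mul_nonneg hA (Real.sinh_nonneg_iff.mpr hx))
        (Real.mul_cosh_add_mul_sinh_pos hβ₂pos hsum hx).le,
      Real.mul_sinh_div_mul_cosh_add_mul_sinh_le hA hβ₂pos hsum hx⟩
  · have hx : Tendsto (fun t => β₂ * t / 2) atTop atTop :=
      (tendsto_id.const_mul_atTop hβ₂pos).atTop_div_const two_pos
    rw [funext hβ, hBA]
    exact (Real.tendsto_mul_sinh_div_mul_cosh_add_mul_sinh hsum.ne').comp hx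

/-- Heston model: the Riccati solution `β` satisfies `0 ≤ β(t) ≤ B` for all `t ≥ 0`, and
`β(t) → B` as `t → ∞`. -/
theorem stmt11 (k m μ ς σ ρ q : ℝ)
    (hk : 0 < k) (hm : 0 < m) (hμ : μ ≠ 0) (hς : 0 < ς) (hσ : 0 < σ)
    (hρ : ρ ∈ Set.Ioo (-1 : ℝ) 1) (hq : q ∈ Set.Ioo (0 : ℝ) 1)
    (β₁ β₂ B : ℝ)
    (hβ₁ : β₁ = k + q * μ * ρ * σ / ς)
    (hβ₂ : β₂ = Real.sqrt (β₁ ^ 2 + q * (1 - q * ρ ^ 2) * μ ^ 2 * σ ^ 2 / ς ^ 2))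
    (hB : B = (1 - q) * (β₂ - β₁) / ((1 - q * ρ ^ 2) * σ ^ 2))
    (β : ℝ → ℝ)
    (hβ : ∀ t, β t = q * (1 - q) * (μ ^ 2 / ς ^ 2) * Real.sinh (β₂ * t / 2) /
        (β₂ * Real.cosh (β₂ * t / 2) + β₁ * Real.sinh (β₂ * t / 2))) :
    (∀ t ≥ (0 : ℝ), 0 ≤ β t ∧ β t ≤ B) ∧
    Tendsto β atTop (𝓝 B) :=
  stmt11_general μ ς σ ρ q hμ hς hσ hρ hq β₁ β₂ B hβ₂ hB β hβ
end

section
/- Define φ(x) = exp(−B·x) and λ = k·m̄·B. Then for every x ∈ ℝ: (1/2)σ²x·φ''(x) − (1/2)q(1−q)(μ²/ς²)x·φ(x) + (k·m̄ − β₁x)·φ'(x) + (q(1−ρ²)σ²x/(2(1−q)))·φ'(x)²/φ(x) = −λ·φ(x). -/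
/-! The ansatz `φ = exp (-B x)` turns every term of the equation into `φ` times an affine
function of `x`. The constant terms match by the choice `λ = k m̄ B`, and the coefficient of
`x φ` is, after multiplying by `2 (1 - q)`, the quadratic
`(1 - qρ²) σ² B² + 2 (1 - q) β₁ B - q (1 - q)² μ²/ς²`, of which `B` is the larger root. -/

open Real

theorem mul_sq_add_mul_eq_of_sq_eq {c r b₁ b₂ d : ℝ} (hc : c ≠ 0) (h : b₂ ^ 2 = b₁ ^ 2 + c * d) :
    c * (r * (b₂ - b₁) / c) ^ 2 + 2 * r * b₁ * (r * (b₂ - b₁) / c) = r ^ 2 * d := by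
  field_simp
  linear_combination r ^ 2 * h

theorem deriv_exp_neg_mul {φ : ℝ → ℝ} {B : ℝ} (hφ : ∀ x, φ x = exp (-B * x)) :
    deriv φ = fun x => -B * φ x := by
  have := iteratedDeriv_exp_const_mul 1 (-B)
  rw [iteratedDeriv_one, ← funext hφ] at this
  simpa [hφ] using this

theorem deriv_deriv_exp_neg_mul {φ : ℝ → ℝ} {B : ℝ} (hφ : ∀ x, φ x = exp (-B * x)) :
    deriv (deriv φ) = fun x => B ^ 2 * φ x := by
  have := iteratedDeriv_exp_const_mul 2 (-B)
  rw [iteratedDeriv_succ, iteratedDeriv_one, ← funext hφ] at this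
  simpa [hφ] using this

theorem hjb_operator_exp_neg_mul {q : ℝ} (hq : q ≠ 1) (σ ρ a κ β₁ : ℝ) {φ : ℝ → ℝ} {B : ℝ}
    (hφ : ∀ x, φ x = exp (-B * x)) (x : ℝ) :
    (1 / 2) * σ ^ 2 * x * deriv (deriv φ) x - (1 / 2) * q * (1 - q) * a * x * φ x
        + (κ - β₁ * x) * deriv φ x
        + (q * (1 - ρ ^ 2) * σ ^ 2 * x / (2 * (1 - q))) * (deriv φ x) ^ 2 / φ x
      = -(κ * B) * φ x + x * φ x / (2 * (1 - q)) *
          ((1 - q * ρ ^ 2) * σ ^ 2 * B ^ 2 + 2 * (1 - q) * β₁ * B - q * (1 - q) ^ 2 * a) := by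
  have hφx : φ x ≠ 0 := by rw [hφ]; exact (exp_pos _).ne'
  have h1q : 1 - q ≠ 0 := sub_ne_zero.mpr hq.symm
  rw [deriv_deriv_exp_neg_mul hφ, deriv_exp_neg_mul hφ]
  field_simp
  ring

theorem stmt12_general (k m μ ς σ ρ q : ℝ)
    (hσ : 0 < σ)
    (hρ : ρ ∈ Set.Ioo (-1 : ℝ) 1) (hq : q ∈ Set.Ioo (0 : ℝ) 1)
    (β₁ β₂ B lam : ℝ)
    (hβ₂ : β₂ = Real.sqrt (β₁ ^ 2 + q * (1 - q * ρ ^ 2) * μ ^ 2 * σ ^ 2 / ς ^ 2))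
    (hB : B = (1 - q) * (β₂ - β₁) / ((1 - q * ρ ^ 2) * σ ^ 2))
    (hlam : lam = k * m * B)
    (φ : ℝ → ℝ) (hφ : ∀ x, φ x = Real.exp (-B * x)) :
    ∀ x, (1 / 2) * σ ^ 2 * x * deriv (deriv φ) x
        - (1 / 2) * q * (1 - q) * (μ ^ 2 / ς ^ 2) * x * φ x
        + (k * m - β₁ * x) * deriv φ x
        + (q * (1 - ρ ^ 2) * σ ^ 2 * x / (2 * (1 - q))) * (deriv φ x) ^ 2 / φ x
      = -lam * φ x := by
  obtain ⟨hq0, hq1⟩ := hq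
  set c := (1 - q * ρ ^ 2) * σ ^ 2
  have hc : 0 < c := by
    have : q * ρ ^ 2 < 1 := by nlinarith [hρ.1, hρ.2, sq_nonneg ρ]
    exact mul_pos (by linarith) (pow_pos hσ 2)
  have hβ₂sq : β₂ ^ 2 = β₁ ^ 2 + c * (q * (μ ^ 2 / ς ^ 2)) := by
    have hrad : β₁ ^ 2 + q * (1 - q * ρ ^ 2) * μ ^ 2 * σ ^ 2 / ς ^ 2
        = β₁ ^ 2 + c * (q * (μ ^ 2 / ς ^ 2)) := by ring
    rw [hβ₂, hrad, sq_sqrt (add_nonneg (sq_nonneg _) (by positivity))]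
  have hquad : c * B ^ 2 + 2 * (1 - q) * β₁ * B - q * (1 - q) ^ 2 * (μ ^ 2 / ς ^ 2) = 0 := by
    rw [hB]
    linear_combination mul_sq_add_mul_eq_of_sq_eq (r := 1 - q) hc.ne' hβ₂sq
  intro x
  rw [hjb_operator_exp_neg_mul hq1.ne (a := μ ^ 2 / ς ^ 2) σ ρ (k * m) β₁ hφ x, hquad, hlam]
  ring

/-- Heston model: `(λ, φ)` with `φ(x) = exp(-Bx)` and `λ = k·m̄·B` solves the ergodic HJB
equation `(1/2)σ²xφ'' - (1/2)q(1-q)(μ²/ς²)xφ + (km̄ - β₁x)φ'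
+ (q(1-ρ²)σ²x/(2(1-q)))φ'²/φ = -λφ`. -/
theorem stmt12 (k m μ ς σ ρ q : ℝ)
    (hk : 0 < k) (hm : 0 < m) (hμ : μ ≠ 0) (hς : 0 < ς) (hσ : 0 < σ)
    (hρ : ρ ∈ Set.Ioo (-1 : ℝ) 1) (hq : q ∈ Set.Ioo (0 : ℝ) 1)
    (β₁ β₂ B lam : ℝ)
    (hβ₁ : β₁ = k + q * μ * ρ * σ / ς)
    (hβ₂ : β₂ = Real.sqrt (β₁ ^ 2 + q * (1 - q * ρ ^ 2) * μ ^ 2 * σ ^ 2 / ς ^ 2))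
    (hB : B = (1 - q) * (β₂ - β₁) / ((1 - q * ρ ^ 2) * σ ^ 2))
    (hlam : lam = k * m * B)
    (φ : ℝ → ℝ) (hφ : ∀ x, φ x = Real.exp (-B * x)) :
    ∀ x, (1 / 2) * σ ^ 2 * x * deriv (deriv φ) x
        - (1 / 2) * q * (1 - q) * (μ ^ 2 / ς ^ 2) * x * φ x
        + (k * m - β₁ * x) * deriv φ x
        + (q * (1 - ρ ^ 2) * σ ^ 2 * x / (2 * (1 - q))) * (deriv φ x) ^ 2 / φ x
      = -lam * φ x :=
  stmt12_general k m μ ς σ ρ q hσ hρ hq β₁ β₂ B lam hβ₂ hB hlam φ hφ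
end

section
/- Let β, γ : [0,∞) → ℝ be differentiable with β'(t) = −(σ²(1−qρ²)/(2(1−q)))·β(t)² − β₁·β(t) + q(1−q)μ²/(2ς²) and γ'(t) = k·m̄·β(t). Then the function v(x,t) := exp(−γ(t) − β(t)·x) satisfies, for all x ∈ ℝ and t ≥ 0, the Hamilton–Jacobi–Bellman equation ∂ₜv = (1/2)σ²x·∂ₓₓv − (1/2)q(1−q)(μ²/ς²)x·v + (k·m̄ − β₁x)·∂ₓv + (q(1−ρ²)σ²x/(2(1−q)))·(∂ₓv)²/v. -/
/-- Heston model: if `β, γ` solve the ODE system `β' = -(σ²(1-qρ²)/(2(1-q)))β² - β₁β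
+ q(1-q)μ²/(2ς²)`, `γ' = km̄β`, then `v(x,t) = exp(-γ(t) - β(t)x)` solves the reduced dual
HJB equation `∂ₜv = (1/2)σ²x∂ₓₓv - (1/2)q(1-q)(μ²/ς²)xv + (km̄-β₁x)∂ₓv
+ (q(1-ρ²)σ²x/(2(1-q)))(∂ₓv)²/v`. -/
theorem stmt13 (k m μ ς σ ρ q : ℝ)
    (hk : 0 < k) (hm : 0 < m) (hμ : μ ≠ 0) (hς : 0 < ς) (hσ : 0 < σ)
    (hρ : ρ ∈ Set.Ioo (-1 : ℝ) 1) (hq : q ∈ Set.Ioo (0 : ℝ) 1)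
    (β₁ β₂ : ℝ)
    (hβ₁ : β₁ = k + q * μ * ρ * σ / ς)
    (hβ₂ : β₂ = Real.sqrt (β₁ ^ 2 + q * (1 - q * ρ ^ 2) * μ ^ 2 * σ ^ 2 / ς ^ 2))
    (β γ : ℝ → ℝ)
    (hβ : ∀ t, 0 ≤ t → HasDerivAt β
      (-(σ ^ 2 * (1 - q * ρ ^ 2) / (2 * (1 - q))) * (β t) ^ 2 - β₁ * β t
        + q * (1 - q) * μ ^ 2 / (2 * ς ^ 2)) t)
    (hγ : ∀ t, 0 ≤ t → HasDerivAt γ (k * m * β t) t)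
    (v : ℝ → ℝ → ℝ)
    (hv : ∀ x t, v x t = Real.exp (-γ t - β t * x)) :
    ∀ x t, 0 ≤ t →
      deriv (fun τ => v x τ) t =
        (1 / 2) * σ ^ 2 * x * deriv (deriv (fun y => v y t)) x
        - (1 / 2) * q * (1 - q) * (μ ^ 2 / ς ^ 2) * x * v x t
        + (k * m - β₁ * x) * deriv (fun y => v y t) x
        + (q * (1 - ρ ^ 2) * σ ^ 2 * x / (2 * (1 - q))) *
            (deriv (fun y => v y t) x) ^ 2 / v x t := by
  intro x t ht
  have hγ' := hγ t ht
  have hβ' := hβ t ht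
  set B' : ℝ := -(σ ^ 2 * (1 - q * ρ ^ 2) / (2 * (1 - q))) * (β t) ^ 2 - β₁ * β t
        + q * (1 - q) * μ ^ 2 / (2 * ς ^ 2) with hB'
  have hqne : (1 : ℝ) - q ≠ 0 := by have := hq.2; linarith
  have hςne : ς ≠ 0 := ne_of_gt hς
  -- spatial derivative
  have hdx : deriv (fun y => v y t) = fun y => -β t * Real.exp (-γ t - β t * y) := by
    funext y
    have h1 : HasDerivAt (fun y : ℝ => -γ t - β t * y) (-β t) y := by
      simpa using ((hasDerivAt_id y).const_mul (β t)).const_sub (-γ t)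
    have h2 := h1.exp
    have h3 : HasDerivAt (fun y => v y t) (Real.exp (-γ t - β t * y) * (-β t)) y := by
      simpa only [hv] using h2
    rw [h3.deriv]; ring
  -- second spatial derivative
  have hdxx : deriv (deriv (fun y => v y t)) x
      = (β t) ^ 2 * Real.exp (-γ t - β t * x) := by
    rw [hdx]
    have h1 : HasDerivAt (fun y : ℝ => -γ t - β t * y) (-β t) x := by
      simpa using ((hasDerivAt_id x).const_mul (β t)).const_sub (-γ t)
    have h2 : HasDerivAt (fun y => -β t * Real.exp (-γ t - β t * y))
        (-β t * (Real.exp (-γ t - β t * x) * (-β t))) x := h1.exp.const_mul (-β t)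
    rw [h2.deriv]; ring
  -- time derivative
  have hdt : deriv (fun τ => v x τ) t
      = (-(k * m * β t) - B' * x) * Real.exp (-γ t - β t * x) := by
    have h1 : HasDerivAt (fun τ => -γ τ - β τ * x) (-(k * m * β t) - B' * x) t :=
      hγ'.neg.sub (hβ'.mul_const x)
    have h2 : HasDerivAt (fun τ => v x τ)
        (Real.exp (-γ t - β t * x) * (-(k * m * β t) - B' * x)) t := by
      simpa only [hv] using h1.exp
    rw [h2.deriv]; ring
  have hE : Real.exp (-γ t - β t * x) ≠ 0 := Real.exp_ne_zero _
  rw [hdt, hdxx, hdx, hv]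
  have h2 : (2:ℝ) - q * 2 ≠ 0 := by intro h; apply hqne; linarith
  have hς2 : ς ^ 2 ≠ 0 := pow_ne_zero 2 hςne
  rw [hB']
  field_simp [hqne, hςne, h2, hς2]
  ring
end

section
/- Fix k > 0, μ ≠ 0, ς > 0, σ > 0, ρ ∈ (−1,1), q ∈ (0,1), and regard the mean-reversion level m̄ as a variable. With σ₁ = ρσ, σ₂ = √(1−ρ²)σ, α₁ = k + qμσ₁/ς, α₂ = σ₁² + σ₂²/(1−q), α₄ = √(α₁² + q(1−q)α₂μ²/ς²) (all independent of m̄), α₃(m̄) = k·m̄, B = (α₄−α₁)/α₂, C(m̄) = α₃(m̄)·B/α₄, define λ(m̄) := −(1/2)α₂·C(m̄)² + α₃(m̄)·C(m̄) + (1/2)(σ₁²+σ₂²)·B. Then for every m̄ ≠ 0, λ is differentiable at m̄ with λ'(m̄) = 2k·C(m̄) − (α₂/α₃(m̄))·k·C(m̄)² (equivalently λ'(m̄) = k·α₃(m̄)·B·(α₄+α₁)/α₄²). -/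
/-!
Since `α₃` is linear and `C = α₃ · B/α₄`, their derivatives are `k` and `k B/α₄ = k C/α₃`, so the
product rule gives `λ' = -α₂ C C' + k C + α₃ C' = 2kC - (α₂/α₃) k C²`. The closed form follows from
`α₂ B = α₄ - α₁`; here `α₂ > 0` because `σ₂ ≠ 0`, and `α₄ > 0` because `q (1 - q) α₂ μ² > 0`.
-/

theorem sq_add_sq_div_one_sub_pos {a b q : ℝ} (hb : b ≠ 0) (hq : q < 1) :
    0 < a ^ 2 + b ^ 2 / (1 - q) := by
  have : 0 < 1 - q := by linarith
  positivity

theorem sqrt_one_sub_sq_mul_ne_zero {ρ σ : ℝ} (hρ : ρ ∈ Set.Ioo (-1 : ℝ) 1) (hσ : σ ≠ 0) :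
    Real.sqrt (1 - ρ ^ 2) * σ ≠ 0 := by
  have : 0 < 1 - ρ ^ 2 := by nlinarith [hρ.1, hρ.2]
  positivity

theorem sqrt_sq_add_mul_sq_div_sq_pos (a : ℝ) {q α μ ς : ℝ} (hq : q ∈ Set.Ioo (0 : ℝ) 1)
    (hα : 0 < α) (hμ : μ ≠ 0) (hς : ς ≠ 0) :
    0 < Real.sqrt (a ^ 2 + q * (1 - q) * α * μ ^ 2 / ς ^ 2) := by
  have : 0 < 1 - q := by linarith [hq.2]
  have : 0 < q := hq.1
  exact Real.sqrt_pos.mpr (by positivity)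

theorem hasDerivAt_neg_half_mul_sq_add_mul_add_const {f g : ℝ → ℝ} {f' g' x : ℝ} (a b : ℝ)
    (hf : HasDerivAt f f' x) (hg : HasDerivAt g g' x) :
    HasDerivAt (fun y => -(1 / 2) * a * g y ^ 2 + f y * g y + b)
      (-a * g x * g' + f' * g x + f x * g') x := by
  refine ((((hg.fun_pow 2).const_mul (-(1 / 2) * a)).fun_add (hf.fun_mul hg)).add_const b)
    |>.congr_deriv ?_
  push_cast
  ring

theorem two_mul_sub_div_mul_sq_eq {k a₁ a₂ a₃ a₄ B : ℝ} (h₃ : a₃ ≠ 0) (h₄ : a₄ ≠ 0)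
    (hB : a₂ * B = a₄ - a₁) :
    2 * k * (a₃ * B / a₄) - (a₂ / a₃) * k * (a₃ * B / a₄) ^ 2
      = k * a₃ * B * (a₄ + a₁) / a₄ ^ 2 := by
  field_simp
  linear_combination (-k * B) * hB

theorem stmt17_general (k μ ς σ ρ q : ℝ)
    (hk : 0 < k) (hμ : μ ≠ 0) (hς : 0 < ς) (hσ : 0 < σ)
    (hρ : ρ ∈ Set.Ioo (-1 : ℝ) 1) (hq : q ∈ Set.Ioo (0 : ℝ) 1)
    (σ₁ σ₂ α₁ α₂ α₄ B : ℝ)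
    (hσ₂ : σ₂ = Real.sqrt (1 - ρ ^ 2) * σ)
    (hα₂ : α₂ = σ₁ ^ 2 + σ₂ ^ 2 / (1 - q))
    (hα₄ : α₄ = Real.sqrt (α₁ ^ 2 + q * (1 - q) * α₂ * μ ^ 2 / ς ^ 2))
    (hB : B = (α₄ - α₁) / α₂)
    (α₃ C lam : ℝ → ℝ)
    (hα₃ : ∀ m, α₃ m = k * m)
    (hC : ∀ m, C m = α₃ m * B / α₄)
    (hlam : ∀ m, lam m = -(1 / 2) * α₂ * (C m) ^ 2 + α₃ m * C m
      + (1 / 2) * (σ₁ ^ 2 + σ₂ ^ 2) * B) :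
    ∀ m : ℝ, m ≠ 0 →
      HasDerivAt lam (2 * k * C m - (α₂ / α₃ m) * k * (C m) ^ 2) m ∧
      2 * k * C m - (α₂ / α₃ m) * k * (C m) ^ 2 = k * α₃ m * B * (α₄ + α₁) / α₄ ^ 2 := by
  intro m hm
  have hα₃m : α₃ m ≠ 0 := by rw [hα₃]; exact mul_ne_zero hk.ne' hm
  have hα₂pos : 0 < α₂ :=
    hα₂ ▸ sq_add_sq_div_one_sub_pos (hσ₂ ▸ sqrt_one_sub_sq_mul_ne_zero hρ hσ.ne') hq.2
  have hα₄pos : 0 < α₄ := hα₄ ▸ sqrt_sq_add_mul_sq_div_sq_pos α₁ hq hα₂pos hμ hς.ne'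
  have hα₃' : HasDerivAt α₃ k m := by
    simpa [funext hα₃] using (hasDerivAt_id m).const_mul k
  have hC' : HasDerivAt C (k * (B / α₄)) m := by
    simpa only [funext hC, mul_div_assoc] using hα₃'.mul_const (B / α₄)
  refine ⟨?_, hC m ▸ two_mul_sub_div_mul_sq_eq hα₃m hα₄pos.ne' ?_⟩
  · rw [funext hlam]
    convert hasDerivAt_neg_half_mul_sq_add_mul_add_const α₂ _ hα₃' hC' using 1
    rw [hC m]
    field_simp
    ring
  · rw [hB]
    field_simp

/-- Kim–Omberg model, sensitivity of the recurrent eigenvalue with respect to the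
mean-reversion level `m̄`: with `λ(m̄) = -(1/2)α₂C(m̄)² + α₃(m̄)C(m̄) + (1/2)σ²B`,
for every `m̄ ≠ 0`, `λ'(m̄) = 2kC(m̄) - (α₂/α₃(m̄))kC(m̄)²`, which equals
`kα₃(m̄)B(α₄+α₁)/α₄²`. -/
theorem stmt17 (k μ ς σ ρ q : ℝ)
    (hk : 0 < k) (hμ : μ ≠ 0) (hς : 0 < ς) (hσ : 0 < σ)
    (hρ : ρ ∈ Set.Ioo (-1 : ℝ) 1) (hq : q ∈ Set.Ioo (0 : ℝ) 1)
    (σ₁ σ₂ α₁ α₂ α₄ B : ℝ)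
    (hσ₁ : σ₁ = ρ * σ) (hσ₂ : σ₂ = Real.sqrt (1 - ρ ^ 2) * σ)
    (hα₁ : α₁ = k + q * μ * σ₁ / ς) (hα₂ : α₂ = σ₁ ^ 2 + σ₂ ^ 2 / (1 - q))
    (hα₄ : α₄ = Real.sqrt (α₁ ^ 2 + q * (1 - q) * α₂ * μ ^ 2 / ς ^ 2))
    (hB : B = (α₄ - α₁) / α₂)
    (α₃ C lam : ℝ → ℝ)
    (hα₃ : ∀ m, α₃ m = k * m)
    (hC : ∀ m, C m = α₃ m * B / α₄)
    (hlam : ∀ m, lam m = -(1 / 2) * α₂ * (C m) ^ 2 + α₃ m * C m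
      + (1 / 2) * (σ₁ ^ 2 + σ₂ ^ 2) * B) :
    ∀ m : ℝ, m ≠ 0 →
      HasDerivAt lam (2 * k * C m - (α₂ / α₃ m) * k * (C m) ^ 2) m ∧
      2 * k * C m - (α₂ / α₃ m) * k * (C m) ^ 2 = k * α₃ m * B * (α₄ + α₁) / α₄ ^ 2 :=
  stmt17_general k μ ς σ ρ q hk hμ hς hσ hρ hq σ₁ σ₂ α₁ α₂ α₄ B hσ₂ hα₂ hα₄ hB α₃ C lam hα₃ hC hlam
end

section
/- Fix m̄ ≠ 0, μ ≠ 0, ς > 0, σ > 0, ρ ∈ (−1,1), q ∈ (0,1), and regard the reversion speed k as a variable. With σ₁ = ρσ, σ₂ = √(1−ρ²)σ, α₂ = σ₁² + σ₂²/(1−q) (independent of k), α₁(k) = k + qμσ₁/ς, α₃(k) = k·m̄, α₄(k) = √(α₁(k)² + q(1−q)α₂μ²/ς²), B(k) = (α₄(k)−α₁(k))/α₂, C(k) = α₃(k)(α₄(k)−α₁(k))/(α₂·α₄(k)), define λ(k) := −(1/2)α₂·C(k)² + α₃(k)·C(k) + (1/2)(σ₁²+σ₂²)·B(k). Then for every k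 > 0, λ is differentiable at k with λ'(k) = −α₂·(m̄/α₃ − (α₄+α₁)/α₄²)·C² + (2m̄ − α₃(α₄+α₁)/α₄²)·C − (σ₁²+σ₂²)·B/(2α₄), where all quantities on the right are evaluated at k. -/
/-!
Writing `α₄ = √(α₁² + D)` with `α₁' = 1`, one has `α₄' = α₁/α₄`, hence `B' = -B/α₄`, and since
`C = α₃ B/α₄` its logarithmic derivative is `C'/C = m̄/α₃ - (α₄ + α₁)/α₄²`. The formula for `λ'`
is then the product rule applied to `λ = -½α₂C² + α₃C + ½(σ₁² + σ₂²)B`.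
-/

theorem HasDerivAt.sqrt_sq_add {f : ℝ → ℝ} {f' D x : ℝ} (hf : HasDerivAt f f' x)
    (hx : 0 < f x ^ 2 + D) :
    HasDerivAt (fun y => √(f y ^ 2 + D)) (f' * f x / √(f x ^ 2 + D)) x := by
  refine ((hf.pow 2).add_const D).sqrt hx.ne' |>.congr_deriv ?_
  have : √(f x ^ 2 + D) ≠ 0 := (Real.sqrt_pos.2 hx).ne'
  simp only [Pi.pow_apply]
  field_simp
  ring

namespace KimOmberg

variable {α₁ α₃ α₄ B C lam : ℝ → ℝ} {a m k : ℝ}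

theorem hasDerivAt_B (h₁ : HasDerivAt α₁ 1 k) (h₄ : HasDerivAt α₄ (α₁ k / α₄ k) k)
    (hα₄ : α₄ k ≠ 0) (hB : ∀ x, B x = (α₄ x - α₁ x) / a) :
    HasDerivAt B (-(B k / α₄ k)) k := by
  rw [funext hB]
  refine (h₄.sub h₁).div_const a |>.congr_deriv ?_
  field_simp
  ring

theorem hasDerivAt_C (h₃ : HasDerivAt α₃ m k) (h₄ : HasDerivAt α₄ (α₁ k / α₄ k) k)
    (hB' : HasDerivAt B (-(B k / α₄ k)) k) (hα₃ : α₃ k ≠ 0) (hα₄ : α₄ k ≠ 0)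
    (hC : ∀ x, C x = α₃ x * B x / α₄ x) :
    HasDerivAt C (C k * (m / α₃ k - (α₄ k + α₁ k) / α₄ k ^ 2)) k := by
  rw [funext hC]
  refine (h₃.mul hB').div h₄ hα₄ |>.congr_deriv ?_
  simp only [Pi.mul_apply]
  field_simp
  ring

theorem hasDerivAt_eigenvalue {C' v : ℝ} (h₃ : HasDerivAt α₃ m k)
    (hB' : HasDerivAt B (-(B k / α₄ k)) k) (hC' : HasDerivAt C C' k)
    (hlam : ∀ x, lam x = -(1 / 2) * a * C x ^ 2 + α₃ x * C x + (1 / 2) * v * B x) :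
    HasDerivAt lam (-a * C k * C' + m * C k + α₃ k * C' - v * B k / (2 * α₄ k)) k := by
  rw [funext hlam]
  refine (((hC'.pow 2).const_mul _).add (h₃.mul hC')).add (hB'.const_mul _) |>.congr_deriv ?_
  ring

end KimOmberg

open KimOmberg in
theorem stmt18_general (m μ ς σ ρ q : ℝ)
    (hm : m ≠ 0) (hμ : μ ≠ 0) (hς : 0 < ς) (hσ : 0 < σ)
    (hρ : ρ ∈ Set.Ioo (-1 : ℝ) 1) (hq : q ∈ Set.Ioo (0 : ℝ) 1)
    (σ₁ σ₂ α₂ : ℝ)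
    (hσ₂ : σ₂ = Real.sqrt (1 - ρ ^ 2) * σ)
    (hα₂ : α₂ = σ₁ ^ 2 + σ₂ ^ 2 / (1 - q))
    (α₁ α₃ α₄ B C lam : ℝ → ℝ)
    (hα₁ : ∀ k, α₁ k = k + q * μ * σ₁ / ς)
    (hα₃ : ∀ k, α₃ k = k * m)
    (hα₄ : ∀ k, α₄ k = Real.sqrt ((α₁ k) ^ 2 + q * (1 - q) * α₂ * μ ^ 2 / ς ^ 2))
    (hB : ∀ k, B k = (α₄ k - α₁ k) / α₂)
    (hC : ∀ k, C k = α₃ k * (α₄ k - α₁ k) / (α₂ * α₄ k))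
    (hlam : ∀ k, lam k = -(1 / 2) * α₂ * (C k) ^ 2 + α₃ k * C k
      + (1 / 2) * (σ₁ ^ 2 + σ₂ ^ 2) * B k) :
    ∀ k > (0 : ℝ),
      HasDerivAt lam
        (-α₂ * (m / α₃ k - (α₄ k + α₁ k) / (α₄ k) ^ 2) * (C k) ^ 2
          + (2 * m - α₃ k * (α₄ k + α₁ k) / (α₄ k) ^ 2) * C k
          - (σ₁ ^ 2 + σ₂ ^ 2) * B k / (2 * α₄ k)) k := by
  intro k hk
  have hσ₂ne : σ₂ ≠ 0 := by
    rw [hσ₂]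
    exact mul_ne_zero (Real.sqrt_ne_zero'.2 (by nlinarith [hρ.1, hρ.2])) hσ.ne'
  have hα₂pos : 0 < α₂ := by
    have := sub_pos.2 hq.2
    rw [hα₂]
    positivity
  have hD : 0 < q * (1 - q) * α₂ * μ ^ 2 / ς ^ 2 := by
    have := sub_pos.2 hq.2
    have := hq.1
    positivity
  have hα₄ne : α₄ k ≠ 0 := by
    rw [hα₄]
    positivity
  have h₁ : HasDerivAt α₁ 1 k := by
    rw [funext hα₁]
    exact (hasDerivAt_id k).add_const _
  have h₃ : HasDerivAt α₃ m k := by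
    rw [funext hα₃]
    simpa using (hasDerivAt_id k).mul_const m
  have h₄ : HasDerivAt α₄ (α₁ k / α₄ k) k := by
    rw [funext hα₄]
    simpa using h₁.sqrt_sq_add (by positivity)
  have hB' := hasDerivAt_B h₁ h₄ hα₄ne hB
  have hα₃ne : α₃ k ≠ 0 := by
    rw [hα₃]
    exact mul_ne_zero hk.ne' hm
  have hC' := hasDerivAt_C (C := C) h₃ h₄ hB' hα₃ne hα₄ne fun x => by rw [hC, hB]; ring
  refine hasDerivAt_eigenvalue h₃ hB' hC' hlam |>.congr_deriv ?_
  linear_combination C k * mul_div_cancel₀ m hα₃ne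

/-- Kim–Omberg model, sensitivity of the recurrent eigenvalue with respect to the
reversion speed `k`: with `λ(k) = -(1/2)α₂C(k)² + α₃(k)C(k) + (1/2)σ²B(k)`, for every
`k > 0`, `λ'(k) = -α₂(m̄/α₃ - (α₄+α₁)/α₄²)C² + (2m̄ - α₃(α₄+α₁)/α₄²)C - σ²B/(2α₄)`. -/
theorem stmt18 (m μ ς σ ρ q : ℝ)
    (hm : m ≠ 0) (hμ : μ ≠ 0) (hς : 0 < ς) (hσ : 0 < σ)
    (hρ : ρ ∈ Set.Ioo (-1 : ℝ) 1) (hq : q ∈ Set.Ioo (0 : ℝ) 1)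
    (σ₁ σ₂ α₂ : ℝ)
    (hσ₁ : σ₁ = ρ * σ) (hσ₂ : σ₂ = Real.sqrt (1 - ρ ^ 2) * σ)
    (hα₂ : α₂ = σ₁ ^ 2 + σ₂ ^ 2 / (1 - q))
    (α₁ α₃ α₄ B C lam : ℝ → ℝ)
    (hα₁ : ∀ k, α₁ k = k + q * μ * σ₁ / ς)
    (hα₃ : ∀ k, α₃ k = k * m)
    (hα₄ : ∀ k, α₄ k = Real.sqrt ((α₁ k) ^ 2 + q * (1 - q) * α₂ * μ ^ 2 / ς ^ 2))
    (hB : ∀ k, B k = (α₄ k - α₁ k) / α₂)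
    (hC : ∀ k, C k = α₃ k * (α₄ k - α₁ k) / (α₂ * α₄ k))
    (hlam : ∀ k, lam k = -(1 / 2) * α₂ * (C k) ^ 2 + α₃ k * C k
      + (1 / 2) * (σ₁ ^ 2 + σ₂ ^ 2) * B k) :
    ∀ k > (0 : ℝ),
      HasDerivAt lam
        (-α₂ * (m / α₃ k - (α₄ k + α₁ k) / (α₄ k) ^ 2) * (C k) ^ 2
          + (2 * m - α₃ k * (α₄ k + α₁ k) / (α₄ k) ^ 2) * C k
          - (σ₁ ^ 2 + σ₂ ^ 2) * B k / (2 * α₄ k)) k :=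
  stmt18_general m μ ς σ ρ q hm hμ hς hσ hρ hq σ₁ σ₂ α₂ hσ₂ hα₂ α₁ α₃ α₄ B C lam hα₁ hα₃ hα₄ hB hC
    hlam
end
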